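/- arXiv:2407.19158 — 10 statements merged into one kernel-verified Lean document; each statement's English description precedes it below -/
import Mathlib

section
/- Let L ≥ 1, let α be an L×L complex matrix with ‖α‖ < 1, and let U, V ∈ U(L). Then the 2L×2L block matrix S(α,U,V) = [[α, ρ(α)U], [Vρ̃(α), −Vα*U]] is unitary, and its upper-right block ρ(α)U is invertible. -/
open Matrix
open scoped Matrix.Norms.L2Operator ComplexOrder

/-! The upper-left corner `α` is a contraction with defect operators `ρ = √(1 - ααᴴ)` and
`ρt = √(1 - αᴴα)`, and `[[α, ρ], [ρt, -αᴴ]]` is its Julia (Halmos) unitary dilation. Unitarity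
reduces, block by block, to the defining identities of `ρ, ρt` and the intertwining relation
`α ρt = ρ α`; the latter holds because `α` intertwines `ρt²` with `ρ²`, and intertwining passes
to positive square roots. `S(α, U, V)` is this dilation
multiplied by the block-diagonal unitaries `diag(1, V)` and `diag(1, U)`. Finally `ρ² = 1 - ααᴴ`
is invertible by the Neumann series, since `‖ααᴴ‖ = ‖α‖² < 1`. -/

lemma commute_of_nonneg_of_commute_mul_self {A : Type*} [PartialOrder A] [Ring A] [StarRing A]
    [TopologicalSpace A] [Algebra ℝ A] [StarOrderedRing A] [IsTopologicalRing A] [T2Space A]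
    [NonnegSpectrumClass ℝ A] [ContinuousFunctionalCalculus ℝ A IsSelfAdjoint]
    {b y : A} (hb : 0 ≤ b) (h : Commute (b * b) y) : Commute b y := by
  rw [← CFC.sqrt_mul_self b hb]
  exact h.cfcₙ_nnreal _

lemma isUnit_one_sub_mul_star_of_norm_lt_one {A : Type*} [NormedRing A] [StarRing A]
    [CStarRing A] [CompleteSpace A] {a : A} (ha : ‖a‖ < 1) : IsUnit (1 - a * star a) := by
  refine (Units.oneSub _ ?_).isUnit
  rw [CStarRing.norm_self_mul_star]
  nlinarith [norm_nonneg a]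

namespace Matrix

section RCLike

open scoped MatrixOrder

variable {𝕜 n : Type*} [RCLike 𝕜] [Fintype n] [DecidableEq n]

lemma fromBlocks_zero_nonneg {R S : Matrix n n 𝕜} (hR : 0 ≤ R) (hS : 0 ≤ S) :
    0 ≤ fromBlocks R 0 0 S := by
  have hW : fromBlocks R 0 0 S = star (fromBlocks (CFC.sqrt R) 0 0 (CFC.sqrt S)) *
      fromBlocks (CFC.sqrt R) 0 0 (CFC.sqrt S) := by
    rw [star_eq_conjTranspose, fromBlocks_conjTranspose, fromBlocks_multiply]
    simp [← star_eq_conjTranspose, (CFC.sqrt_nonneg R).isSelfAdjoint.star_eq,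
      (CFC.sqrt_nonneg S).isSelfAdjoint.star_eq, CFC.sqrt_mul_sqrt_self R hR,
      CFC.sqrt_mul_sqrt_self S hS]
  rw [hW]
  exact star_mul_self_nonneg _

/-- `[[0, X], [0, 0]]` commutes with `diag(R, S)²`, hence with its square root `diag(R, S)`. -/
lemma PosSemidef.mul_eq_mul_of_mul_mul_self_eq {R S X : Matrix n n 𝕜} (hR : R.PosSemidef)
    (hS : S.PosSemidef) (h : X * (S * S) = (R * R) * X) : X * S = R * X := by
  have hJ : Commute (fromBlocks R 0 0 S * fromBlocks R 0 0 S) (fromBlocks 0 X 0 0) := by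
    rw [Commute, SemiconjBy, fromBlocks_multiply, fromBlocks_multiply, fromBlocks_multiply]
    simp [h]
  have hc := (commute_of_nonneg_of_commute_mul_self
    (fromBlocks_zero_nonneg hR.nonneg hS.nonneg) hJ).eq
  simpa [fromBlocks_multiply] using (congrArg toBlocks₁₂ hc).symm

end RCLike

section CommRing

variable {R n m : Type*} [CommRing R] [StarRing R] [Fintype n] [DecidableEq n]
  [Fintype m] [DecidableEq m]

lemma fromBlocks_zero_mem_unitaryGroup {U : Matrix n n R} {V : Matrix m m R}
    (hU : U ∈ unitaryGroup n R) (hV : V ∈ unitaryGroup m R) :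
    fromBlocks U 0 0 V ∈ unitaryGroup (n ⊕ m) R := by
  rw [mem_unitaryGroup_iff] at hU hV ⊢
  rw [star_eq_conjTranspose, fromBlocks_conjTranspose, fromBlocks_multiply, ← fromBlocks_one]
  simp [← star_eq_conjTranspose, hU, hV]

lemma fromBlocks_defect_mem_unitaryGroup {α ρ ρt : Matrix n n R} (hρ : ρᴴ = ρ) (hρt : ρtᴴ = ρt)
    (hρ2 : ρ * ρ = 1 - α * αᴴ) (hρt2 : ρt * ρt = 1 - αᴴ * α) (hint : α * ρt = ρ * α) :
    fromBlocks α ρ ρt (-αᴴ) ∈ unitaryGroup (n ⊕ n) R := by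
  have hint_adj : ρt * αᴴ = αᴴ * ρ := by
    simpa [conjTranspose_mul, hρ, hρt] using congrArg conjTranspose hint
  rw [mem_unitaryGroup_iff, star_eq_conjTranspose, fromBlocks_conjTranspose, fromBlocks_multiply,
    ← fromBlocks_one, hρ, hρt, conjTranspose_neg, conjTranspose_conjTranspose]
  refine fromBlocks_inj.mpr ⟨?_, ?_, ?_, ?_⟩
  · rw [hρ2]; abel
  · rw [hint]; noncomm_ring
  · rw [hint_adj]; noncomm_ring
  · rw [hρt2]; noncomm_ring

end CommRing

end Matrix

theorem stmt_4_general (L : ℕ) (α ρ ρt U V : Matrix (Fin L) (Fin L) ℂ)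
    (hα : ‖α‖ < 1)
    (hρ : ρ.PosSemidef) (hρ2 : ρ * ρ = 1 - α * αᴴ)
    (hρt : ρt.PosSemidef) (hρt2 : ρt * ρt = 1 - αᴴ * α)
    (hU : U ∈ Matrix.unitaryGroup (Fin L) ℂ) (hV : V ∈ Matrix.unitaryGroup (Fin L) ℂ) :
    fromBlocks α (ρ * U) (V * ρt) (-(V * αᴴ * U)) ∈
        Matrix.unitaryGroup (Fin L ⊕ Fin L) ℂ ∧
      IsUnit (ρ * U) := by
  have hint : α * ρt = ρ * α :=
    hρ.mul_eq_mul_of_mul_mul_self_eq hρt (by rw [hρ2, hρt2]; noncomm_ring)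
  have hdilation := fromBlocks_defect_mem_unitaryGroup hρ.1.eq hρt.1.eq hρ2 hρt2 hint
  have hfactor : fromBlocks α (ρ * U) (V * ρt) (-(V * αᴴ * U)) =
      fromBlocks 1 0 0 V * fromBlocks α ρ ρt (-αᴴ) * fromBlocks 1 0 0 U := by
    simp [fromBlocks_multiply, Matrix.mul_assoc]
  have hρ_unit : IsUnit ρ := by
    rw [← isUnit_mul_self_iff, hρ2]
    exact isUnit_one_sub_mul_star_of_norm_lt_one hα
  refine ⟨?_, hρ_unit.mul (Unitary.isUnit_coe (U := ⟨U, hU⟩))⟩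
  rw [hfactor]
  exact mul_mem (mul_mem (fromBlocks_zero_mem_unitaryGroup (one_mem _) hV) hdilation)
    (fromBlocks_zero_mem_unitaryGroup (one_mem _) hU)

/-- Let `L ≥ 1`, `α` an `L×L` complex matrix with `‖α‖ < 1` (operator norm
induced by the Euclidean norm), and `U, V ∈ U(L)`. With `ρ` the positive semidefinite square root
of `1 - α αᴴ` and `ρt` the one of `1 - αᴴ α`, the block matrix
`S(α,U,V) = [[α, ρU], [V ρt, -V αᴴ U]]` is unitary and its upper-right block `ρ U` is
invertible. -/
theorem stmt_4 (L : ℕ) (hL : 1 ≤ L) (α ρ ρt U V : Matrix (Fin L) (Fin L) ℂ)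
    (hα : ‖α‖ < 1)
    (hρ : ρ.PosSemidef) (hρ2 : ρ * ρ = 1 - α * αᴴ)
    (hρt : ρt.PosSemidef) (hρt2 : ρt * ρt = 1 - αᴴ * α)
    (hU : U ∈ Matrix.unitaryGroup (Fin L) ℂ) (hV : V ∈ Matrix.unitaryGroup (Fin L) ℂ) :
    fromBlocks α (ρ * U) (V * ρt) (-(V * αᴴ * U)) ∈
        Matrix.unitaryGroup (Fin L ⊕ Fin L) ℂ ∧
      IsUnit (ρ * U) :=
  stmt_4_general L α ρ ρt U V hα hρ hρ2 hρt hρt2 hU hV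
end

section
/- Let L ≥ 1 and let S be a 2L×2L complex unitary matrix written in L×L blocks as S = [[a, b], [c, d]] with b invertible. Then the matrix φ(S) = [[c − d b⁻¹ a, d b⁻¹], [−b⁻¹ a, b⁻¹]] belongs to U(L,L), i.e. φ(S)* 𝓛 φ(S) = 𝓛. -/
open Matrix
open scoped Matrix.Norms.L2Operator ComplexOrder

/-- Let `L ≥ 1` and let `S = [[a,b],[c,d]]` be a `2L×2L` complex unitary matrix
(in `L×L` blocks) with `b` invertible. Then `φ(S) = [[c - d b⁻¹ a, d b⁻¹], [-b⁻¹ a, b⁻¹]]`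
belongs to `U(L,L)`, i.e. `φ(S)ᴴ 𝓛 φ(S) = 𝓛` where `𝓛 = diag(I, -I)`. -/
theorem stmt_5 (L : ℕ) (hL : 1 ≤ L) (a b c d : Matrix (Fin L) (Fin L) ℂ)
    (hS : fromBlocks a b c d ∈ Matrix.unitaryGroup (Fin L ⊕ Fin L) ℂ)
    (hb : IsUnit b) :
    (fromBlocks (c - d * b⁻¹ * a) (d * b⁻¹) (-(b⁻¹ * a)) b⁻¹)ᴴ *
        fromBlocks (1 : Matrix (Fin L) (Fin L) ℂ) 0 0 (-1) *
        fromBlocks (c - d * b⁻¹ * a) (d * b⁻¹) (-(b⁻¹ * a)) b⁻¹ =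
      fromBlocks (1 : Matrix (Fin L) (Fin L) ℂ) 0 0 (-1) := by
  have hdet : IsUnit b.det := (Matrix.isUnit_iff_isUnit_det b).mp hb
  have hBl : b⁻¹ * b = 1 := nonsing_inv_mul b hdet
  have hBr : b * b⁻¹ = 1 := mul_nonsing_inv b hdet
  have hBlH : bᴴ * b⁻¹ᴴ = 1 := by rw [← conjTranspose_mul, hBl, conjTranspose_one]
  have hBrH : b⁻¹ᴴ * bᴴ = 1 := by rw [← conjTranspose_mul, hBr, conjTranspose_one]
  have hU : (fromBlocks a b c d)ᴴ * (fromBlocks a b c d) = 1 := hS.1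
  rw [fromBlocks_conjTranspose, fromBlocks_multiply, ← fromBlocks_one, fromBlocks_inj] at hU
  obtain ⟨h1, h2, h3, h4⟩ := hU
  have hdd : dᴴ * d = 1 - bᴴ * b := by rw [← h4]; abel
  have hcd : cᴴ * d = -(aᴴ * b) := eq_neg_of_add_eq_zero_right h2
  have hdc : dᴴ * c = -(bᴴ * a) := eq_neg_of_add_eq_zero_right h3
  rw [fromBlocks_conjTranspose, fromBlocks_multiply, fromBlocks_multiply, fromBlocks_inj]
  simp only [conjTranspose_sub, conjTranspose_neg, conjTranspose_mul, mul_zero, zero_mul,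
    mul_one, one_mul, mul_neg, neg_mul, neg_neg, add_zero, zero_add]
  refine ⟨?_, ?_, ?_, ?_⟩
  · calc (cᴴ - aᴴ * (b⁻¹ᴴ * dᴴ)) * (c - d * b⁻¹ * a) + -(aᴴ * b⁻¹ᴴ * (b⁻¹ * a))
        = cᴴ * c - (cᴴ * d) * (b⁻¹ * a) - aᴴ * b⁻¹ᴴ * (dᴴ * c)
          + aᴴ * b⁻¹ᴴ * (dᴴ * d) * (b⁻¹ * a) - aᴴ * b⁻¹ᴴ * (b⁻¹ * a) := by noncomm_ring
      _ = cᴴ * c - (-(aᴴ * b)) * (b⁻¹ * a) - aᴴ * b⁻¹ᴴ * (-(bᴴ * a))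
          + aᴴ * b⁻¹ᴴ * (1 - bᴴ * b) * (b⁻¹ * a) - aᴴ * b⁻¹ᴴ * (b⁻¹ * a) := by
            rw [hcd, hdc, hdd]
      _ = cᴴ * c + aᴴ * ((b * b⁻¹) * a) + aᴴ * ((b⁻¹ᴴ * bᴴ) * a)
          - aᴴ * ((b⁻¹ᴴ * bᴴ) * ((b * b⁻¹) * a)) := by noncomm_ring
      _ = aᴴ * a + cᴴ * c := by rw [hBr, hBrH]; simp only [one_mul]; abel
      _ = 1 := h1
  · calc (cᴴ - aᴴ * (b⁻¹ᴴ * dᴴ)) * (d * b⁻¹) + aᴴ * b⁻¹ᴴ * b⁻¹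
        = (cᴴ * d) * b⁻¹ - aᴴ * b⁻¹ᴴ * (dᴴ * d) * b⁻¹ + aᴴ * b⁻¹ᴴ * b⁻¹ := by noncomm_ring
      _ = (-(aᴴ * b)) * b⁻¹ - aᴴ * b⁻¹ᴴ * (1 - bᴴ * b) * b⁻¹ + aᴴ * b⁻¹ᴴ * b⁻¹ := by
            rw [hcd, hdd]
      _ = -(aᴴ * (b * b⁻¹)) + aᴴ * ((b⁻¹ᴴ * bᴴ) * (b * b⁻¹)) := by noncomm_ring
      _ = 0 := by rw [hBr, hBrH]; simp
  · calc b⁻¹ᴴ * dᴴ * (c - d * b⁻¹ * a) + b⁻¹ᴴ * (b⁻¹ * a)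
        = b⁻¹ᴴ * (dᴴ * c) - b⁻¹ᴴ * (dᴴ * d) * (b⁻¹ * a) + b⁻¹ᴴ * (b⁻¹ * a) := by noncomm_ring
      _ = b⁻¹ᴴ * (-(bᴴ * a)) - b⁻¹ᴴ * (1 - bᴴ * b) * (b⁻¹ * a) + b⁻¹ᴴ * (b⁻¹ * a) := by
            rw [hdc, hdd]
      _ = -((b⁻¹ᴴ * bᴴ) * a) + (b⁻¹ᴴ * bᴴ) * ((b * b⁻¹) * a) := by noncomm_ring
      _ = 0 := by rw [hBrH, hBr]; simp
  · calc b⁻¹ᴴ * dᴴ * (d * b⁻¹) + -(b⁻¹ᴴ * b⁻¹)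
        = b⁻¹ᴴ * (dᴴ * d) * b⁻¹ - b⁻¹ᴴ * b⁻¹ := by noncomm_ring
      _ = b⁻¹ᴴ * (1 - bᴴ * b) * b⁻¹ - b⁻¹ᴴ * b⁻¹ := by rw [hdd]
      _ = -((b⁻¹ᴴ * bᴴ) * (b * b⁻¹)) := by noncomm_ring
      _ = -1 := by rw [hBrH, hBr, one_mul]
end

section
/- Let L ≥ 1, let α be an L×L complex matrix with ‖α‖ < 1, let U₁, V₁, U₂, V₂ ∈ U(L), and let z ∈ ℂ with |z| = 1. Then the transfer matrix T(z) belongs to U(L,L), i.e. T(z)* 𝓛 T(z) = 𝓛. -/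
/-!
Since `T₀(z) = diag(z⁻¹, 1) · T₀(1) · diag(1, z)` and block-diagonal matrices with unitary blocks
preserve `𝓛 = diag(1, -1)`, everything reduces to `T₀(1)* 𝓛 T₀(1) = 𝓛`. This is a block
computation once one knows `ρ̃⁻¹ α* = α* ρ⁻¹`, which follows from `(1 - α*α) α* = α* (1 - αα*)`
because square roots of positive semidefinite matrices inherit intertwining relations.
-/

open Matrix
open scoped Matrix.Norms.L2Operator ComplexOrder

/-- The block matrix `T₀(z) = [[z⁻¹ ρ̃⁻¹, ρ̃⁻¹ α*], [α ρ̃⁻¹, z ρ⁻¹]]`, where `ρ` (resp. `ρt`)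
stands for the positive semidefinite square root of `1 - α αᴴ` (resp. `1 - αᴴ α`), passed as
arguments. -/
noncomputable def T0mat (L : ℕ) (α ρ ρt : Matrix (Fin L) (Fin L) ℂ) (z : ℂ) :
    Matrix (Fin L ⊕ Fin L) (Fin L ⊕ Fin L) ℂ :=
  fromBlocks (z⁻¹ • ρt⁻¹) (ρt⁻¹ * αᴴ) (α * ρt⁻¹) (z • ρ⁻¹)

/-- The transfer matrix `T(z) = diag(V₂, U₂ᴴ) · T₀(z) · diag(V₁, U₁ᴴ) · T₀(1)`. -/
noncomputable def transferMat (L : ℕ) (α ρ ρt U₁ V₁ U₂ V₂ : Matrix (Fin L) (Fin L) ℂ) (z : ℂ) :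
    Matrix (Fin L ⊕ Fin L) (Fin L ⊕ Fin L) ℂ :=
  fromBlocks V₂ 0 0 U₂ᴴ * T0mat L α ρ ρt z * fromBlocks V₁ 0 0 U₁ᴴ * T0mat L α ρ ρt 1

namespace Matrix

section Isometry

variable {R n : Type*} [Semiring R] [StarRing R] [Fintype n] [DecidableEq n]

/-- For `J = diag(1, -1)` this is the group `U(L,L)`. -/
def isometrySubmonoid (J : Matrix n n R) : Submonoid (Matrix n n R) where
  carrier := {T | Tᴴ * J * T = J}
  one_mem' := by simp
  mul_mem' {A B} hA hB :=
    calc (A * B)ᴴ * J * (A * B) = Bᴴ * (Aᴴ * J * A) * B := by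
          simp only [conjTranspose_mul, Matrix.mul_assoc]
      _ = J := by rw [hA, hB]

lemma mem_isometrySubmonoid {J T : Matrix n n R} :
    T ∈ isometrySubmonoid J ↔ Tᴴ * J * T = J := Iff.rfl

end Isometry

variable {𝕜 m n : Type*} [RCLike 𝕜] [Fintype m] [Fintype n] [DecidableEq n]

theorem isUnit_one_sub_conjTranspose_mul_self {α : Matrix m n 𝕜} (hα : ‖α‖ < 1) :
    IsUnit (1 - αᴴ * α) := by
  refine isUnit_one_sub_of_norm_lt_one ?_
  rw [l2_opNorm_conjTranspose_mul_self]
  nlinarith [norm_nonneg α]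

theorem smul_one_mem_unitaryGroup {z : 𝕜} (hz : ‖z‖ = 1) :
    (z • 1 : Matrix n n 𝕜) ∈ unitaryGroup n 𝕜 := by
  rw [mem_unitaryGroup_iff, star_smul, star_one, smul_mul_smul, mul_one, RCLike.star_def,
    RCLike.mul_conj, hz]
  simp

variable [DecidableEq m]

section MatrixOrder

open scoped MatrixOrder

theorem PosSemidef.fromBlocks_zero_zero {A : Matrix m m 𝕜} {B : Matrix n n 𝕜}
    (hA : A.PosSemidef) (hB : B.PosSemidef) : (fromBlocks A 0 0 B).PosSemidef := by
  obtain ⟨X, rfl⟩ := CStarAlgebra.nonneg_iff_eq_star_mul_self.mp hA.nonneg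
  obtain ⟨Y, rfl⟩ := CStarAlgebra.nonneg_iff_eq_star_mul_self.mp hB.nonneg
  simpa [star_eq_conjTranspose, fromBlocks_multiply, fromBlocks_conjTranspose] using
    posSemidef_conjTranspose_mul_self (fromBlocks X 0 0 Y)

/-- `fromBlocks 0 X 0 0` commutes with `(A ⊕ B)²`, hence with its square root `A ⊕ B`. -/
theorem PosSemidef.mul_eq_mul_of_mul_self_mul_eq {A : Matrix m m 𝕜} {B : Matrix n n 𝕜}
    {X : Matrix m n 𝕜} (hA : A.PosSemidef) (hB : B.PosSemidef)
    (h : A * A * X = X * (B * B)) : A * X = X * B := by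
  set D := fromBlocks A 0 0 B
  set N : Matrix (m ⊕ n) (m ⊕ n) 𝕜 := fromBlocks 0 X 0 0
  have hD2 : Commute (D * D) N := by
    simp [D, N, commute_iff_eq, fromBlocks_multiply, h]
  have hD : Commute D N := by
    simpa [← CFC.sqrt_eq_cfc, CFC.sqrt_mul_self D (hA.fromBlocks_zero_zero hB).nonneg] using
      hD2.cfc_nnreal NNReal.sqrt
  simpa [D, N, fromBlocks_multiply] using congrArg toBlocks₁₂ hD.eq

end MatrixOrder

theorem fromBlocks_mem_isometrySubmonoid {U : Matrix m m 𝕜} {V : Matrix n n 𝕜}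
    (hU : U ∈ unitaryGroup m 𝕜) (hV : V ∈ unitaryGroup n 𝕜) :
    fromBlocks U 0 0 V ∈ isometrySubmonoid (fromBlocks 1 0 0 (-1)) := by
  rw [mem_unitaryGroup_iff', star_eq_conjTranspose] at hU hV
  simp [mem_isometrySubmonoid, fromBlocks_conjTranspose, fromBlocks_multiply, hU, hV]

theorem fromBlocks_mem_isometrySubmonoid_of_isHermitian {P : Matrix n n 𝕜} {Q : Matrix m m 𝕜}
    {α : Matrix m n 𝕜} (hP : P.IsHermitian) (hQ : Q.IsHermitian) (hPQ : P * αᴴ = αᴴ * Q)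
    (hP1 : P * (1 - αᴴ * α) * P = 1) (hQ1 : Q * (1 - α * αᴴ) * Q = 1) :
    fromBlocks P (P * αᴴ) (α * P) Q ∈ isometrySubmonoid (fromBlocks 1 0 0 (-1)) := by
  have hQP : α * P = Q * α := by
    simpa [hP.eq, hQ.eq] using congrArg conjTranspose hPQ
  rw [mem_isometrySubmonoid, fromBlocks_conjTranspose, conjTranspose_mul, conjTranspose_mul,
    conjTranspose_conjTranspose, hP.eq, hQ.eq, fromBlocks_multiply, fromBlocks_multiply,
    fromBlocks_inj]
  simp only [Matrix.mul_one, Matrix.mul_zero, add_zero, zero_add, Matrix.mul_neg,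
    Matrix.neg_mul]
  refine ⟨?_, ?_, ?_, ?_⟩
  · rw [← hP1, Matrix.mul_sub, Matrix.sub_mul, Matrix.mul_one, sub_eq_add_neg]
    simp only [Matrix.mul_assoc]
  · rw [hPQ, ← Matrix.mul_assoc, hPQ, add_neg_cancel]
  · rw [hQP, Matrix.mul_assoc, hQP, add_neg_cancel]
  · rw [← hQ1, Matrix.mul_sub, Matrix.sub_mul, Matrix.mul_one, neg_sub, sub_eq_neg_add, hQP]
    simp only [Matrix.mul_assoc, hPQ, add_comm]

end Matrix

theorem T0mat_eq_mul (L : ℕ) (α ρ ρt : Matrix (Fin L) (Fin L) ℂ) {z : ℂ} (hz : z ≠ 0) :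
    T0mat L α ρ ρt z =
      fromBlocks (z⁻¹ • 1) 0 0 1 * T0mat L α ρ ρt 1 * fromBlocks 1 0 0 (z • 1) := by
  simp [T0mat, fromBlocks_multiply, smul_smul, hz]

theorem T0mat_one_mem_isometrySubmonoid {L : ℕ} {α ρ ρt : Matrix (Fin L) (Fin L) ℂ}
    (hα : ‖α‖ < 1) (hρ : ρ.PosSemidef) (hρ2 : ρ * ρ = 1 - α * αᴴ)
    (hρt : ρt.PosSemidef) (hρt2 : ρt * ρt = 1 - αᴴ * α) :
    T0mat L α ρ ρt 1 ∈ isometrySubmonoid (fromBlocks 1 0 0 (-1)) := by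
  have hρu : IsUnit ρ.det := by
    refine (isUnit_iff_isUnit_det ρ).mp (isUnit_mul_self_iff.mp ?_)
    simpa [hρ2] using
      isUnit_one_sub_conjTranspose_mul_self (α := αᴴ) (by rwa [l2_opNorm_conjTranspose])
  have hρtu : IsUnit ρt.det :=
    (isUnit_iff_isUnit_det ρt).mp
      (isUnit_mul_self_iff.mp (hρt2 ▸ isUnit_one_sub_conjTranspose_mul_self hα))
  have hαρ : ρt * αᴴ = αᴴ * ρ :=
    hρt.mul_eq_mul_of_mul_self_mul_eq hρ (by rw [hρt2, hρ2]; noncomm_ring)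
  have hαρ_inv : ρt⁻¹ * αᴴ = αᴴ * ρ⁻¹ :=
    calc ρt⁻¹ * αᴴ = ρt⁻¹ * (αᴴ * ρ) * ρ⁻¹ := by
          rw [← Matrix.mul_assoc, mul_nonsing_inv_cancel_right _ _ hρu]
      _ = αᴴ * ρ⁻¹ := by
          rw [← hαρ, nonsing_inv_mul_cancel_left _ _ hρtu]
  simpa [T0mat] using
    fromBlocks_mem_isometrySubmonoid_of_isHermitian hρt.1.inv hρ.1.inv hαρ_inv
      (by rw [← hρt2, Matrix.mul_assoc, mul_nonsing_inv_cancel_right _ _ hρtu,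
        nonsing_inv_mul _ hρtu])
      (by rw [← hρ2, Matrix.mul_assoc, mul_nonsing_inv_cancel_right _ _ hρu,
        nonsing_inv_mul _ hρu])

theorem stmt_6_general (L : ℕ) (α ρ ρt U₁ V₁ U₂ V₂ : Matrix (Fin L) (Fin L) ℂ)
    (hα : ‖α‖ < 1)
    (hρ : ρ.PosSemidef) (hρ2 : ρ * ρ = 1 - α * αᴴ)
    (hρt : ρt.PosSemidef) (hρt2 : ρt * ρt = 1 - αᴴ * α)
    (hU₁ : U₁ ∈ Matrix.unitaryGroup (Fin L) ℂ) (hV₁ : V₁ ∈ Matrix.unitaryGroup (Fin L) ℂ)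
    (hU₂ : U₂ ∈ Matrix.unitaryGroup (Fin L) ℂ) (hV₂ : V₂ ∈ Matrix.unitaryGroup (Fin L) ℂ)
    (z : ℂ) (hz : ‖z‖ = 1) :
    (transferMat L α ρ ρt U₁ V₁ U₂ V₂ z)ᴴ *
        fromBlocks (1 : Matrix (Fin L) (Fin L) ℂ) 0 0 (-1) *
        transferMat L α ρ ρt U₁ V₁ U₂ V₂ z =
      fromBlocks (1 : Matrix (Fin L) (Fin L) ℂ) 0 0 (-1) := by
  have hz0 : z ≠ 0 := norm_ne_zero_iff.mp (hz ▸ one_ne_zero)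
  have hT := T0mat_one_mem_isometrySubmonoid hα hρ hρ2 hρt hρt2
  have hD₁ := fromBlocks_mem_isometrySubmonoid hV₁ (Unitary.star_mem hU₁)
  have hD₂ := fromBlocks_mem_isometrySubmonoid hV₂ (Unitary.star_mem hU₂)
  have hZ₁ := fromBlocks_mem_isometrySubmonoid
    (smul_one_mem_unitaryGroup (n := Fin L) (by rw [norm_inv, hz, inv_one]))
    (one_mem (unitaryGroup (Fin L) ℂ))
  have hZ₂ := fromBlocks_mem_isometrySubmonoid (one_mem (unitaryGroup (Fin L) ℂ))
    (smul_one_mem_unitaryGroup (n := Fin L) hz)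
  rw [← mem_isometrySubmonoid, transferMat, T0mat_eq_mul L α ρ ρt hz0]
  exact mul_mem (mul_mem (mul_mem hD₂ (mul_mem (mul_mem hZ₁ hT) hZ₂)) hD₁) hT

/-- Let `L ≥ 1`, `α` an `L×L` complex matrix with `‖α‖ < 1` (operator norm
induced by the Euclidean norm), `U₁, V₁, U₂, V₂ ∈ U(L)` and `z ∈ ℂ` with `|z| = 1`. Then the
transfer matrix `T(z)` belongs to `U(L,L)`, i.e. `T(z)ᴴ 𝓛 T(z) = 𝓛` with `𝓛 = diag(I, -I)`. -/
theorem stmt_6 (L : ℕ) (hL : 1 ≤ L) (α ρ ρt U₁ V₁ U₂ V₂ : Matrix (Fin L) (Fin L) ℂ)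
    (hα : ‖α‖ < 1)
    (hρ : ρ.PosSemidef) (hρ2 : ρ * ρ = 1 - α * αᴴ)
    (hρt : ρt.PosSemidef) (hρt2 : ρt * ρt = 1 - αᴴ * α)
    (hU₁ : U₁ ∈ Matrix.unitaryGroup (Fin L) ℂ) (hV₁ : V₁ ∈ Matrix.unitaryGroup (Fin L) ℂ)
    (hU₂ : U₂ ∈ Matrix.unitaryGroup (Fin L) ℂ) (hV₂ : V₂ ∈ Matrix.unitaryGroup (Fin L) ℂ)
    (z : ℂ) (hz : ‖z‖ = 1) :
    (transferMat L α ρ ρt U₁ V₁ U₂ V₂ z)ᴴ *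
        fromBlocks (1 : Matrix (Fin L) (Fin L) ℂ) 0 0 (-1) *
        transferMat L α ρ ρt U₁ V₁ U₂ V₂ z =
      fromBlocks (1 : Matrix (Fin L) (Fin L) ℂ) 0 0 (-1) :=
  stmt_6_general L α ρ ρt U₁ V₁ U₂ V₂ hα hρ hρ2 hρt hρt2 hU₁ hV₁ hU₂ hV₂ z hz
end

section
/- Let L ≥ 1, let α be an L×L complex matrix with ‖α‖ < 1, let U₁, V₁, U₂, V₂ ∈ U(L), and let ε ∈ (0,1). Then for every z ∈ S_ε the transfer matrix satisfies ‖T(z)‖ ≤ 4 c_ε² (1 + ‖α‖)² / (1 − ‖α‖²), where c_ε = max(1/(1−ε), 1+ε). -/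
open Matrix
open scoped Matrix.Norms.L2Operator ComplexOrder

/-!
Up to the unitary block-diagonal factors, `T(z)` is `T₀(z) T₀(1)`, so `‖T(z)‖ ≤ ‖T₀(z)‖ ‖T₀(1)‖`.
Each `T₀(w)` is bounded blockwise. Since `ρ̃⁻¹` is Hermitian with `ρ̃⁻¹ ρ̃⁻¹ = (1 - α*α)⁻¹`, the
C*-identity and the Neumann series give `‖ρ̃⁻¹‖² ≤ 1 / (1 - ‖α‖²)`, and likewise for `ρ⁻¹`.
Hence `‖T₀(w)‖ ≤ 2 (c + ‖α‖) / √(1 - ‖α‖²)` as soon as `|w|, |w|⁻¹ ≤ c`, and `c_ε` is such a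
bound on `S_ε`.
-/

namespace Matrix

variable {𝕜 : Type*} [RCLike 𝕜] {l m n o : Type*} [Fintype l] [Fintype m] [Fintype n] [Fintype o]

lemma l2_opNorm_one_le [DecidableEq n] : ‖(1 : Matrix n n 𝕜)‖ ≤ 1 := by
  have h := l2_opNorm_conjTranspose_mul_self (1 : Matrix n n 𝕜)
  rw [conjTranspose_one, one_mul] at h
  nlinarith [norm_nonneg (1 : Matrix n n 𝕜)]

lemma l2_opNorm_le_one_of_conjTranspose_mul_self_eq_one [DecidableEq n] {P : Matrix m n 𝕜}
    (hP : Pᴴ * P = 1) : ‖P‖ ≤ 1 := by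
  have h := l2_opNorm_conjTranspose_mul_self P
  rw [hP] at h
  nlinarith [norm_nonneg P, l2_opNorm_one_le (𝕜 := 𝕜) (n := n)]

lemma l2_opNorm_mul_mul_le_of_isometry [DecidableEq l] [DecidableEq n] [DecidableEq o]
    {P : Matrix m l 𝕜} {Q : Matrix n o 𝕜} (hP : Pᴴ * P = 1) (hQ : Q * Qᴴ = 1)
    (X : Matrix l n 𝕜) : ‖P * X * Q‖ ≤ ‖X‖ := by
  have hP' := l2_opNorm_le_one_of_conjTranspose_mul_self_eq_one hP
  have hQ' : ‖Q‖ ≤ 1 := by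
    rw [← l2_opNorm_conjTranspose]
    exact l2_opNorm_le_one_of_conjTranspose_mul_self_eq_one (by rwa [conjTranspose_conjTranspose])
  calc ‖P * X * Q‖ ≤ ‖P‖ * ‖X‖ * ‖Q‖ :=
        (l2_opNorm_mul _ _).trans (mul_le_mul_of_nonneg_right (l2_opNorm_mul _ _) (norm_nonneg _))
    _ ≤ 1 * ‖X‖ * 1 := by gcongr
    _ = ‖X‖ := by ring

lemma l2_opNorm_fromBlocks_le [DecidableEq l] [DecidableEq m] [DecidableEq n] [DecidableEq o]
    (A : Matrix l n 𝕜) (B : Matrix l o 𝕜) (C : Matrix m n 𝕜) (D : Matrix m o 𝕜) :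
    ‖fromBlocks A B C D‖ ≤ ‖A‖ + ‖B‖ + ‖C‖ + ‖D‖ := by
  set P₁ : Matrix (l ⊕ m) l 𝕜 := fromRows 1 0
  set P₂ : Matrix (l ⊕ m) m 𝕜 := fromRows 0 1
  set Q₁ : Matrix n (n ⊕ o) 𝕜 := fromCols 1 0
  set Q₂ : Matrix o (n ⊕ o) 𝕜 := fromCols 0 1
  have hP₁ : P₁ᴴ * P₁ = 1 := by
    simp [P₁, conjTranspose_fromRows_eq_fromCols_conjTranspose, fromCols_mul_fromRows]
  have hP₂ : P₂ᴴ * P₂ = 1 := by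
    simp [P₂, conjTranspose_fromRows_eq_fromCols_conjTranspose, fromCols_mul_fromRows]
  have hQ₁ : Q₁ * Q₁ᴴ = 1 := by
    simp [Q₁, conjTranspose_fromCols_eq_fromRows_conjTranspose, fromCols_mul_fromRows]
  have hQ₂ : Q₂ * Q₂ᴴ = 1 := by
    simp [Q₂, conjTranspose_fromCols_eq_fromRows_conjTranspose, fromCols_mul_fromRows]
  have hsplit : fromBlocks A B C D =
      P₁ * A * Q₁ + P₁ * B * Q₂ + P₂ * C * Q₁ + P₂ * D * Q₂ := by
    ext (i | i) (j | j) <;> simp [P₁, P₂, Q₁, Q₂]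
  rw [hsplit]
  refine (norm_add₄_le ..).trans ?_
  gcongr <;> exact l2_opNorm_mul_mul_le_of_isometry ‹_› ‹_› _

lemma l2_opNorm_inv_sq_le_of_mul_self_eq_one_sub [DecidableEq n] {σ β : Matrix n n 𝕜}
    (hσ : σ.IsHermitian) (hβ : ‖β‖ < 1) (h : σ * σ = 1 - β) :
    ‖σ⁻¹‖ ^ 2 ≤ (1 - ‖β‖)⁻¹ := by
  have hgeom : (1 - β)⁻¹ = ∑' k : ℕ, β ^ k := inv_eq_right_inv (mul_neg_geom_series β hβ)
  calc ‖σ⁻¹‖ ^ 2 = ‖(σ⁻¹)ᴴ * σ⁻¹‖ := by rw [l2_opNorm_conjTranspose_mul_self, sq]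
    _ = ‖(1 - β)⁻¹‖ := by rw [conjTranspose_nonsing_inv, hσ.eq, ← mul_inv_rev, h]
    _ ≤ ‖(1 : Matrix n n 𝕜)‖ - 1 + (1 - ‖β‖)⁻¹ := hgeom ▸ tsum_geometric_le_of_norm_lt_one β hβ
    _ ≤ (1 - ‖β‖)⁻¹ := by linarith [l2_opNorm_one_le (𝕜 := 𝕜) (n := n)]

lemma l2_opNorm_inv_le_of_mul_self_eq_one_sub_conjTranspose_mul_self [DecidableEq n]
    {σ : Matrix n n 𝕜} {A : Matrix m n 𝕜} (hσ : σ.IsHermitian) (hA : ‖A‖ < 1)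
    (h : σ * σ = 1 - Aᴴ * A) : ‖σ⁻¹‖ ≤ (√(1 - ‖A‖ ^ 2))⁻¹ := by
  have hAA : ‖Aᴴ * A‖ = ‖A‖ ^ 2 := by rw [l2_opNorm_conjTranspose_mul_self, sq]
  have hsq := l2_opNorm_inv_sq_le_of_mul_self_eq_one_sub hσ
    (by rw [hAA]; nlinarith [norm_nonneg A]) h
  rw [← Real.sqrt_inv, Real.le_sqrt (norm_nonneg _) (inv_nonneg.mpr (by nlinarith [norm_nonneg A]))]
  rwa [hAA] at hsq

lemma fromBlocks_mem_unitaryGroup {R : Type*} [CommRing R] [StarRing R] [DecidableEq m]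
    [DecidableEq n] {V : Matrix m m R} {W : Matrix n n R} (hV : V ∈ unitaryGroup m R)
    (hW : W ∈ unitaryGroup n R) : fromBlocks V 0 0 W ∈ unitaryGroup (m ⊕ n) R := by
  rw [mem_unitaryGroup_iff, star_eq_conjTranspose] at *
  simp [fromBlocks_conjTranspose, fromBlocks_multiply, hV, hW]

end Matrix

section TransferMatrix

variable {L : ℕ} {α ρ ρt : Matrix (Fin L) (Fin L) ℂ}

lemma norm_T0mat_le {w : ℂ} {c r : ℝ} (hw : ‖w‖ ≤ c) (hw' : ‖w⁻¹‖ ≤ c)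
    (hρ : ‖ρ⁻¹‖ ≤ r) (hρt : ‖ρt⁻¹‖ ≤ r) : ‖T0mat L α ρ ρt w‖ ≤ 2 * (c + ‖α‖) * r := by
  have hc : 0 ≤ c := (norm_nonneg _).trans hw
  calc ‖T0mat L α ρ ρt w‖
      ≤ ‖w⁻¹ • ρt⁻¹‖ + ‖ρt⁻¹ * αᴴ‖ + ‖α * ρt⁻¹‖ + ‖w • ρ⁻¹‖ := l2_opNorm_fromBlocks_le ..
    _ ≤ ‖w⁻¹‖ * ‖ρt⁻¹‖ + ‖ρt⁻¹‖ * ‖αᴴ‖ + ‖α‖ * ‖ρt⁻¹‖ + ‖w‖ * ‖ρ⁻¹‖ := by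
      simp only [norm_smul]
      gcongr <;> exact l2_opNorm_mul _ _
    _ ≤ c * r + r * ‖α‖ + ‖α‖ * r + c * r := by
      rw [l2_opNorm_conjTranspose]
      gcongr
    _ = 2 * (c + ‖α‖) * r := by ring

lemma norm_transferMat_le {U₁ V₁ U₂ V₂ : Matrix (Fin L) (Fin L) ℂ}
    (hU₁ : U₁ ∈ unitaryGroup (Fin L) ℂ) (hV₁ : V₁ ∈ unitaryGroup (Fin L) ℂ)
    (hU₂ : U₂ ∈ unitaryGroup (Fin L) ℂ) (hV₂ : V₂ ∈ unitaryGroup (Fin L) ℂ) (z : ℂ) :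
    ‖transferMat L α ρ ρt U₁ V₁ U₂ V₂ z‖ ≤ ‖T0mat L α ρ ρt z‖ * ‖T0mat L α ρ ρt 1‖ := by
  have hD₁ : fromBlocks V₁ 0 0 U₁ᴴ ∈ unitaryGroup (Fin L ⊕ Fin L) ℂ :=
    fromBlocks_mem_unitaryGroup hV₁ (Unitary.star_mem hU₁)
  have hD₂ : fromBlocks V₂ 0 0 U₂ᴴ ∈ unitaryGroup (Fin L ⊕ Fin L) ℂ :=
    fromBlocks_mem_unitaryGroup hV₂ (Unitary.star_mem hU₂)
  refine (norm_mul_le _ _).trans_eq ?_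
  rw [CStarRing.norm_mul_mem_unitary _ hD₁, CStarRing.norm_mem_unitary_mul _ hD₂]

end TransferMatrix

theorem stmt_8_general (L : ℕ) (α ρ ρt U₁ V₁ U₂ V₂ : Matrix (Fin L) (Fin L) ℂ)
    (hα : ‖α‖ < 1)
    (hρ : ρ.PosSemidef) (hρ2 : ρ * ρ = 1 - α * αᴴ)
    (hρt : ρt.PosSemidef) (hρt2 : ρt * ρt = 1 - αᴴ * α)
    (hU₁ : U₁ ∈ Matrix.unitaryGroup (Fin L) ℂ) (hV₁ : V₁ ∈ Matrix.unitaryGroup (Fin L) ℂ)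
    (hU₂ : U₂ ∈ Matrix.unitaryGroup (Fin L) ℂ) (hV₂ : V₂ ∈ Matrix.unitaryGroup (Fin L) ℂ)
    (ε : ℝ) (hε : ε ∈ Set.Ioo (0 : ℝ) 1) :
    ∀ z : ℂ, 1 - ε < ‖z‖ → ‖z‖ < 1 + ε →
      ‖transferMat L α ρ ρt U₁ V₁ U₂ V₂ z‖ ≤
        4 * (max (1 / (1 - ε)) (1 + ε)) ^ 2 * (1 + ‖α‖) ^ 2 / (1 - ‖α‖ ^ 2) := by
  intro z hz₁ hz₂
  obtain ⟨hε₀, hε₁⟩ := hε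
  set a := ‖α‖
  set c := max (1 / (1 - ε)) (1 + ε)
  set r := (√(1 - a ^ 2))⁻¹
  have hc : 1 ≤ c := le_max_of_le_right (by linarith)
  have hz : ‖z‖ ≤ c := hz₂.le.trans (le_max_right _ _)
  have hz' : ‖z⁻¹‖ ≤ c := by
    rw [norm_inv, ← one_div]
    exact (one_div_le_one_div_of_le (by linarith) hz₁.le).trans (le_max_left _ _)
  have hρr : ‖ρ⁻¹‖ ≤ r := by
    have h := l2_opNorm_inv_le_of_mul_self_eq_one_sub_conjTranspose_mul_self (A := αᴴ)
      hρ.isHermitian (by rwa [l2_opNorm_conjTranspose]) (by rwa [conjTranspose_conjTranspose])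
    rwa [l2_opNorm_conjTranspose] at h
  have hρtr : ‖ρt⁻¹‖ ≤ r :=
    l2_opNorm_inv_le_of_mul_self_eq_one_sub_conjTranspose_mul_self hρt.isHermitian hα hρt2
  have hr : r ^ 2 = (1 - a ^ 2)⁻¹ := by
    rw [inv_pow, Real.sq_sqrt (by nlinarith [norm_nonneg α])]
  calc ‖transferMat L α ρ ρt U₁ V₁ U₂ V₂ z‖
      ≤ ‖T0mat L α ρ ρt z‖ * ‖T0mat L α ρ ρt 1‖ := norm_transferMat_le hU₁ hV₁ hU₂ hV₂ z
    _ ≤ (2 * (c + a) * r) * (2 * (1 + a) * r) := by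
      gcongr
      · exact norm_T0mat_le hz hz' hρr hρtr
      · exact norm_T0mat_le (by simp) (by simp) hρr hρtr
    _ ≤ (2 * (c * (1 + a)) * r) * (2 * (c * (1 + a)) * r) := by
      gcongr <;> nlinarith [norm_nonneg α]
    _ = 4 * c ^ 2 * (1 + a) ^ 2 * r ^ 2 := by ring
    _ = 4 * c ^ 2 * (1 + a) ^ 2 / (1 - a ^ 2) := by rw [hr, div_eq_mul_inv]

/-- Let `L ≥ 1`, `α` an `L×L` complex matrix with `‖α‖ < 1` (operator norm
induced by the Euclidean norm), `U₁, V₁, U₂, V₂ ∈ U(L)`, and `ε ∈ (0,1)`. Then for every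
`z ∈ S_ε = {z : 1 - ε < |z| < 1 + ε}` the transfer matrix satisfies
`‖T(z)‖ ≤ 4 c_ε² (1 + ‖α‖)² / (1 - ‖α‖²)`, where `c_ε = max (1/(1-ε)) (1+ε)`. -/
theorem stmt_8 (L : ℕ) (hL : 1 ≤ L) (α ρ ρt U₁ V₁ U₂ V₂ : Matrix (Fin L) (Fin L) ℂ)
    (hα : ‖α‖ < 1)
    (hρ : ρ.PosSemidef) (hρ2 : ρ * ρ = 1 - α * αᴴ)
    (hρt : ρt.PosSemidef) (hρt2 : ρt * ρt = 1 - αᴴ * α)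
    (hU₁ : U₁ ∈ Matrix.unitaryGroup (Fin L) ℂ) (hV₁ : V₁ ∈ Matrix.unitaryGroup (Fin L) ℂ)
    (hU₂ : U₂ ∈ Matrix.unitaryGroup (Fin L) ℂ) (hV₂ : V₂ ∈ Matrix.unitaryGroup (Fin L) ℂ)
    (ε : ℝ) (hε : ε ∈ Set.Ioo (0 : ℝ) 1) :
    ∀ z : ℂ, 1 - ε < ‖z‖ → ‖z‖ < 1 + ε →
      ‖transferMat L α ρ ρt U₁ V₁ U₂ V₂ z‖ ≤
        4 * (max (1 / (1 - ε)) (1 + ε)) ^ 2 * (1 + ‖α‖) ^ 2 / (1 - ‖α‖ ^ 2) :=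
  stmt_8_general L α ρ ρt U₁ V₁ U₂ V₂ hα hρ hρ2 hρt hρt2 hU₁ hV₁ hU₂ hV₂ ε hε
end

section
/- Let k ≥ 1, let M and N be invertible k×k complex matrices, and let x ∈ ℂ^k be a nonzero vector. Then |log‖Mx‖ − log‖Nx‖| ≤ max(‖M⁻¹‖, ‖N⁻¹‖) · ‖M − N‖, where ‖·‖ applied to vectors is the Euclidean norm and applied to matrices is the induced operator norm, and log is the real natural logarithm. -/
open Matrix
open scoped Matrix.Norms.L2Operator

lemma aux_le_opnorm {k : ℕ} (A : Matrix (Fin k) (Fin k) ℂ) (x : EuclideanSpace ℂ (Fin k)) :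
    ‖Matrix.toEuclideanLin A x‖ ≤ ‖A‖ * ‖x‖ := by
  simpa [Matrix.toEuclideanLin_apply] using A.l2_opNorm_mulVec x

lemma aux_lower {k : ℕ} (A : Matrix (Fin k) (Fin k) ℂ) (hA : IsUnit A)
    (x : EuclideanSpace ℂ (Fin k)) : ‖x‖ ≤ ‖A⁻¹‖ * ‖Matrix.toEuclideanLin A x‖ := by
  have h1 : Matrix.toEuclideanLin A⁻¹ (Matrix.toEuclideanLin A x) = x := by
    simp [Matrix.toEuclideanLin_apply, Matrix.mulVec_mulVec,
      Matrix.nonsing_inv_mul A ((Matrix.isUnit_iff_isUnit_det A).mp hA)]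
  calc ‖x‖ = ‖Matrix.toEuclideanLin A⁻¹ (Matrix.toEuclideanLin A x)‖ := by rw [h1]
    _ ≤ ‖A⁻¹‖ * ‖Matrix.toEuclideanLin A x‖ := aux_le_opnorm _ _

lemma aux_pos {k : ℕ} (A : Matrix (Fin k) (Fin k) ℂ) (hA : IsUnit A)
    (x : EuclideanSpace ℂ (Fin k)) (hx : x ≠ 0) : 0 < ‖Matrix.toEuclideanLin A x‖ := by
  rcases eq_or_lt_of_le (norm_nonneg (Matrix.toEuclideanLin A x)) with h | h
  · exfalso
    have h2 := aux_lower A hA x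
    rw [← h] at h2
    simp at h2
    exact hx h2
  · exact h

lemma aux_log_sub {k : ℕ} (A B : Matrix (Fin k) (Fin k) ℂ) (hA : IsUnit A) (hB : IsUnit B)
    (x : EuclideanSpace ℂ (Fin k)) (hx : x ≠ 0) :
    Real.log ‖Matrix.toEuclideanLin A x‖ - Real.log ‖Matrix.toEuclideanLin B x‖ ≤
      ‖B⁻¹‖ * ‖A - B‖ := by
  set a := ‖Matrix.toEuclideanLin A x‖
  set b := ‖Matrix.toEuclideanLin B x‖
  have ha : 0 < a := aux_pos A hA x hx
  have hb : 0 < b := aux_pos B hB x hx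
  have h1 : Real.log a - Real.log b ≤ a / b - 1 := by
    rw [← Real.log_div ha.ne' hb.ne']
    exact Real.log_le_sub_one_of_pos (div_pos ha hb)
  have h2 : a - b ≤ ‖A - B‖ * ‖x‖ := by
    have : a - b ≤ ‖Matrix.toEuclideanLin A x - Matrix.toEuclideanLin B x‖ :=
      norm_sub_norm_le _ _
    calc a - b ≤ ‖Matrix.toEuclideanLin (A - B) x‖ := by simpa using this
      _ ≤ ‖A - B‖ * ‖x‖ := aux_le_opnorm _ _
  have h3 : ‖x‖ ≤ ‖B⁻¹‖ * b := aux_lower B hB x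
  have hxpos : 0 < ‖x‖ := norm_pos_iff.mpr hx
  have h4 : a / b - 1 = (a - b) / b := by field_simp
  have h5 : (a - b) / b ≤ ‖B⁻¹‖ * ‖A - B‖ := by
    rw [div_le_iff₀ hb]
    calc a - b ≤ ‖A - B‖ * ‖x‖ := h2
      _ ≤ ‖A - B‖ * (‖B⁻¹‖ * b) := by
          exact mul_le_mul_of_nonneg_left h3 (norm_nonneg _)
      _ = ‖B⁻¹‖ * ‖A - B‖ * b := by ring
  linarith

/-- Let `k ≥ 1`, let `M` and `N` be invertible `k×k` complex matrices, and
let `x ∈ ℂᵏ` be a nonzero vector. Then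
`|log‖Mx‖ - log‖Nx‖| ≤ max(‖M⁻¹‖, ‖N⁻¹‖) · ‖M - N‖`, where the vector norm is Euclidean and
the matrix norm is the induced operator norm. -/
theorem stmt_10 (k : ℕ) (hk : 1 ≤ k) (M N : Matrix (Fin k) (Fin k) ℂ)
    (hM : IsUnit M) (hN : IsUnit N) (x : EuclideanSpace ℂ (Fin k)) (hx : x ≠ 0) :
    |Real.log ‖Matrix.toEuclideanLin M x‖ - Real.log ‖Matrix.toEuclideanLin N x‖| ≤
      max ‖M⁻¹‖ ‖N⁻¹‖ * ‖M - N‖ := by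
  rw [abs_sub_le_iff]
  constructor
  · calc _ ≤ ‖N⁻¹‖ * ‖M - N‖ := aux_log_sub M N hM hN x hx
      _ ≤ max ‖M⁻¹‖ ‖N⁻¹‖ * ‖M - N‖ :=
        mul_le_mul_of_nonneg_right (le_max_right _ _) (norm_nonneg _)
  · calc _ ≤ ‖M⁻¹‖ * ‖N - M‖ := aux_log_sub N M hN hM x hx
      _ = ‖M⁻¹‖ * ‖M - N‖ := by rw [norm_sub_rev]
      _ ≤ max ‖M⁻¹‖ ‖N⁻¹‖ * ‖M - N‖ :=
        mul_le_mul_of_nonneg_right (le_max_left _ _) (norm_nonneg _)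
end

section
/- Let L ≥ 1 and let S be a 2L×2L complex unitary matrix written in L×L blocks as S = [[a, b], [c, d]], with b and c invertible. Then a c⁻¹ d − b = −(b*)⁻¹ and d b⁻¹ a − c = −(c*)⁻¹. -/
open Matrix

/-- Let `L ≥ 1` and let `S = [[a,b],[c,d]]` be a `2L×2L` complex unitary
matrix (in `L×L` blocks) with `b` and `c` invertible. Then `a c⁻¹ d - b = -(bᴴ)⁻¹` and
`d b⁻¹ a - c = -(cᴴ)⁻¹`. -/
theorem stmt_12 (L : ℕ) (hL : 1 ≤ L) (a b c d : Matrix (Fin L) (Fin L) ℂ)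
    (hS : fromBlocks a b c d ∈ Matrix.unitaryGroup (Fin L ⊕ Fin L) ℂ)
    (hb : IsUnit b) (hc : IsUnit c) :
    a * c⁻¹ * d - b = -(bᴴ)⁻¹ ∧ d * b⁻¹ * a - c = -(cᴴ)⁻¹ := by
  have h1 : (fromBlocks a b c d)ᴴ * fromBlocks a b c d = 1 := hS.1
  rw [fromBlocks_conjTranspose, fromBlocks_multiply, ← fromBlocks_one] at h1
  have e11 := congrArg toBlocks₁₁ h1
  have e12 := congrArg toBlocks₁₂ h1
  have e21 := congrArg toBlocks₂₁ h1
  have e22 := congrArg toBlocks₂₂ h1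
  simp only [toBlocks_fromBlocks₁₁, toBlocks_fromBlocks₁₂, toBlocks_fromBlocks₂₁,
    toBlocks_fromBlocks₂₂] at e11 e12 e21 e22
  have hcc : c * c⁻¹ = 1 := mul_nonsing_inv c ((isUnit_iff_isUnit_det c).mp hc)
  have hbb : b * b⁻¹ = 1 := mul_nonsing_inv b ((isUnit_iff_isUnit_det b).mp hb)
  have hba : bᴴ * a = -(dᴴ * c) := eq_neg_of_add_eq_zero_left e21
  have hcd : cᴴ * d = -(aᴴ * b) := eq_neg_of_add_eq_zero_right e12
  have key1 : bᴴ * (b - a * c⁻¹ * d) = 1 := by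
    have : bᴴ * (b - a * c⁻¹ * d) = bᴴ * b - (bᴴ * a) * c⁻¹ * d := by noncomm_ring
    rw [this, hba]
    have : -(dᴴ * c) * c⁻¹ * d = -(dᴴ * (c * c⁻¹) * d) := by noncomm_ring
    rw [this, hcc, mul_one, sub_neg_eq_add, e22]
  have key2 : cᴴ * (c - d * b⁻¹ * a) = 1 := by
    have : cᴴ * (c - d * b⁻¹ * a) = cᴴ * c - (cᴴ * d) * b⁻¹ * a := by noncomm_ring
    rw [this, hcd]
    have : -(aᴴ * b) * b⁻¹ * a = -(aᴴ * (b * b⁻¹) * a) := by noncomm_ring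
    rw [this, hbb, mul_one, sub_neg_eq_add, add_comm, e11]
  constructor
  · rw [inv_eq_right_inv key1, neg_sub]
  · rw [inv_eq_right_inv key2, neg_sub]
end

section
/- Let L ≥ 1 and let E, F, G, H be L×L complex matrices such that E and F are invertible and the Schur complement H − G E⁻¹ F is invertible. Then the 2L×2L block matrix M = [[E, F], [G, H]] is invertible and its inverse satisfies ‖M⁻¹‖_F ≥ ‖E⁻¹‖_F / ‖H F⁻¹ − G E⁻¹‖_F, where ‖·‖_F denotes the Frobenius (Hilbert–Schmidt) norm. -/
open Matrix

attribute [local instance] Matrix.frobeniusSeminormedAddCommGroup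
  Matrix.frobeniusNormedAddCommGroup

/-- The Frobenius norm of a block is at most the Frobenius norm of the block matrix. -/
lemma frobenius_norm_toBlocks₁₂_le {m n l o : Type*} [Fintype m] [Fintype n] [Fintype l]
    [Fintype o] (A : Matrix m n ℂ) (B : Matrix m o ℂ) (C : Matrix l n ℂ) (D : Matrix l o ℂ) :
    ‖B‖ ≤ ‖fromBlocks A B C D‖ := by
  rw [frobenius_norm_def, frobenius_norm_def]
  apply Real.rpow_le_rpow (by positivity) _ (by norm_num)
  rw [Fintype.sum_sum_type]
  have h1 : ∀ i : m, ∑ j, ‖B i j‖ ^ (2:ℝ) ≤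
      ∑ j : n ⊕ o, ‖fromBlocks A B C D (Sum.inl i) j‖ ^ (2:ℝ) := by
    intro i
    rw [Fintype.sum_sum_type]
    simp only [fromBlocks_apply₁₁, fromBlocks_apply₁₂]
    exact le_add_of_nonneg_left (by positivity)
  calc ∑ i : m, ∑ j, ‖B i j‖ ^ (2:ℝ)
      ≤ ∑ i : m, ∑ j : n ⊕ o, ‖fromBlocks A B C D (Sum.inl i) j‖ ^ (2:ℝ) :=
        Finset.sum_le_sum fun i _ => h1 i
    _ ≤ _ := le_add_of_nonneg_right (by positivity)

/-- Let `L ≥ 1` and `E, F, G, H` be `L×L` complex matrices such that `E` and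
`F` are invertible and the Schur complement `H - G E⁻¹ F` is invertible. Then the block matrix
`M = [[E,F],[G,H]]` is invertible and `‖M⁻¹‖_F ≥ ‖E⁻¹‖_F / ‖H F⁻¹ - G E⁻¹‖_F`, where `‖·‖_F`
is the Frobenius norm. -/
theorem stmt_13 (L : ℕ) (hL : 1 ≤ L) (E F G H : Matrix (Fin L) (Fin L) ℂ)
    (hE : IsUnit E) (hF : IsUnit F) (hSchur : IsUnit (H - G * E⁻¹ * F)) :
    IsUnit (fromBlocks E F G H) ∧
      ‖E⁻¹‖ / ‖H * F⁻¹ - G * E⁻¹‖ ≤ ‖(fromBlocks E F G H)⁻¹‖ := by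
  obtain ⟨iE⟩ := hE.nonempty_invertible
  have hinvE : ⅟E = E⁻¹ := invOf_eq_nonsing_inv E
  obtain ⟨iS⟩ := hSchur.nonempty_invertible
  haveI iS' : Invertible (H - G * ⅟E * F) := by rwa [hinvE]
  haveI iM : Invertible (fromBlocks E F G H) := fromBlocks₁₁Invertible E F G H
  refine ⟨isUnit_of_invertible _, ?_⟩
  set S := H - G * E⁻¹ * F with hS
  -- key identity: H * F⁻¹ - G * E⁻¹ = S * F⁻¹
  have hkey : H * F⁻¹ - G * E⁻¹ = S * F⁻¹ := by
    rw [hS, sub_mul, mul_assoc, mul_assoc, Matrix.mul_nonsing_inv _ ((Matrix.isUnit_iff_isUnit_det F).mp hF), mul_one]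
  have hSE : H - G * ⅟E * F = S := by rw [hS, hinvE]
  have hSinv : ⅟(H - G * ⅟E * F) = S⁻¹ := by rw [invOf_eq_nonsing_inv, hSE]
  -- the (1,2) block of the inverse is -(E⁻¹ * F * S⁻¹)
  have hblock : (fromBlocks E F G H)⁻¹ =
      fromBlocks (⅟E + ⅟E * F * ⅟(H - G * ⅟E * F) * G * ⅟E)
        (-(⅟E * F * ⅟(H - G * ⅟E * F))) (-(⅟(H - G * ⅟E * F) * G * ⅟E))
        (⅟(H - G * ⅟E * F)) := by
    rw [← invOf_eq_nonsing_inv, invOf_fromBlocks₁₁_eq]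
  have hle1 : ‖-(⅟E * F * ⅟(H - G * ⅟E * F))‖ ≤ ‖(fromBlocks E F G H)⁻¹‖ := by
    rw [hblock]; exact frobenius_norm_toBlocks₁₂_le _ _ _ _
  rw [norm_neg] at hle1
  -- E⁻¹ = (E⁻¹ * F * S⁻¹) * (S * F⁻¹)
  have hEinv : E⁻¹ = (⅟E * F * ⅟(H - G * ⅟E * F)) * (S * F⁻¹) := by
    rw [hSinv, hinvE, mul_assoc, mul_assoc, ← mul_assoc S⁻¹,
      Matrix.nonsing_inv_mul _ ((Matrix.isUnit_iff_isUnit_det S).mp hSchur), one_mul,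
      Matrix.mul_nonsing_inv _ ((Matrix.isUnit_iff_isUnit_det F).mp hF), mul_one]
  have hnorm : ‖E⁻¹‖ ≤ ‖(fromBlocks E F G H)⁻¹‖ * ‖S * F⁻¹‖ := by
    calc ‖E⁻¹‖ = ‖(⅟E * F * ⅟(H - G * ⅟E * F)) * (S * F⁻¹)‖ := by rw [← hEinv]
      _ ≤ ‖⅟E * F * ⅟(H - G * ⅟E * F)‖ * ‖S * F⁻¹‖ := frobenius_norm_mul _ _
      _ ≤ _ := by
          apply mul_le_mul_of_nonneg_right hle1 (norm_nonneg _)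
  rw [hkey]
  rcases eq_or_ne ‖S * F⁻¹‖ 0 with h0 | h0
  · rw [h0, div_zero]; exact norm_nonneg _
  · rw [div_le_iff₀ (lt_of_le_of_ne (norm_nonneg _) (Ne.symm h0))]
    exact hnorm
end

section
/- Let L ≥ 1, let A, B, C, D be L×L complex matrices, and let U, V ∈ U(L). Assume that BU − A and BU + A are invertible, and, setting M = (DU − C)(BU − A)⁻¹ V* and N = (DU + C)(BU + A)⁻¹ V*, assume that I − M and I − N are invertible. Define E = (C − VA) + (D − VB)U, F = (D − VB)U − (C − VA), G = (A + V*C) + (B + V*D)U, and H = (B + V*D)U − (A + V*C). Then E and F are invertible and H F⁻¹ − G E⁻¹ = V* ( (I + N)(I − N)⁻¹ − (I + M)(I − M)⁻¹ ). -/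
open Matrix

/-- Let `L ≥ 1`, let `A, B, C, D` be `L×L` complex matrices and
`U, V ∈ U(L)`. Assume `BU - A` and `BU + A` are invertible and, setting
`M = (DU - C)(BU - A)⁻¹ V*` and `N = (DU + C)(BU + A)⁻¹ V*`, that `1 - M` and `1 - N` are
invertible. With `E = (C - VA) + (D - VB)U`, `F = (D - VB)U - (C - VA)`,
`G = (A + V*C) + (B + V*D)U` and `H = (B + V*D)U - (A + V*C)`, the matrices `E` and `F` are
invertible and `H F⁻¹ - G E⁻¹ = V* ((1 + N)(1 - N)⁻¹ - (1 + M)(1 - M)⁻¹)`. -/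
theorem stmt_14 (L : ℕ) (hL : 1 ≤ L) (A B C D U V M N : Matrix (Fin L) (Fin L) ℂ)
    (hU : U ∈ Matrix.unitaryGroup (Fin L) ℂ) (hV : V ∈ Matrix.unitaryGroup (Fin L) ℂ)
    (h1 : IsUnit (B * U - A)) (h2 : IsUnit (B * U + A))
    (hM : M = (D * U - C) * (B * U - A)⁻¹ * Vᴴ)
    (hN : N = (D * U + C) * (B * U + A)⁻¹ * Vᴴ)
    (hIM : IsUnit (1 - M)) (hIN : IsUnit (1 - N)) :
    IsUnit ((C - V * A) + (D - V * B) * U) ∧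
    IsUnit ((D - V * B) * U - (C - V * A)) ∧
    ((B + Vᴴ * D) * U - (A + Vᴴ * C)) * ((D - V * B) * U - (C - V * A))⁻¹ -
        ((A + Vᴴ * C) + (B + Vᴴ * D) * U) * ((C - V * A) + (D - V * B) * U)⁻¹ =
      Vᴴ * ((1 + N) * (1 - N)⁻¹ - (1 + M) * (1 - M)⁻¹) := by
  have hV1 : Vᴴ * V = 1 := hV.1
  have hV2 : V * Vᴴ = 1 := hV.2
  have hVu : IsUnit V := ⟨⟨V, Vᴴ, hV2, hV1⟩, rfl⟩
  have hPd : IsUnit (B * U - A).det := (Matrix.isUnit_iff_isUnit_det _).mp h1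
  have hQd : IsUnit (B * U + A).det := (Matrix.isUnit_iff_isUnit_det _).mp h2
  have hPinv : (B * U - A)⁻¹ * (B * U - A) = 1 := Matrix.nonsing_inv_mul _ hPd
  have hQinv : (B * U + A)⁻¹ * (B * U + A) = 1 := Matrix.nonsing_inv_mul _ hQd
  have hMkey : M * (V * (B * U - A)) = D * U - C := by
    rw [hM]
    calc (D * U - C) * (B * U - A)⁻¹ * Vᴴ * (V * (B * U - A))
        = (D * U - C) * (B * U - A)⁻¹ * ((Vᴴ * V) * (B * U - A)) := by noncomm_ring
      _ = D * U - C := by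
          rw [hV1, Matrix.one_mul, Matrix.mul_assoc, hPinv, Matrix.mul_one]
  have hNkey : N * (V * (B * U + A)) = D * U + C := by
    rw [hN]
    calc (D * U + C) * (B * U + A)⁻¹ * Vᴴ * (V * (B * U + A))
        = (D * U + C) * (B * U + A)⁻¹ * ((Vᴴ * V) * (B * U + A)) := by noncomm_ring
      _ = D * U + C := by
          rw [hV1, Matrix.one_mul, Matrix.mul_assoc, hQinv, Matrix.mul_one]
  have hE : (C - V * A) + (D - V * B) * U = (N - 1) * (V * (B * U + A)) := by
    have h : (N - 1) * (V * (B * U + A)) =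
        N * (V * (B * U + A)) - V * (B * U + A) := by noncomm_ring
    rw [h, hNkey]; noncomm_ring
  have hF : (D - V * B) * U - (C - V * A) = (M - 1) * (V * (B * U - A)) := by
    have h : (M - 1) * (V * (B * U - A)) =
        M * (V * (B * U - A)) - V * (B * U - A) := by noncomm_ring
    rw [h, hMkey]; noncomm_ring
  have hG : (A + Vᴴ * C) + (B + Vᴴ * D) * U = Vᴴ * ((1 + N) * (V * (B * U + A))) := by
    have h : Vᴴ * ((1 + N) * (V * (B * U + A))) =
        (Vᴴ * V) * (B * U + A) + Vᴴ * (N * (V * (B * U + A))) := by noncomm_ring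
    rw [h, hNkey, hV1, Matrix.one_mul]; noncomm_ring
  have hH : (B + Vᴴ * D) * U - (A + Vᴴ * C) = Vᴴ * ((1 + M) * (V * (B * U - A))) := by
    have h : Vᴴ * ((1 + M) * (V * (B * U - A))) =
        (Vᴴ * V) * (B * U - A) + Vᴴ * (M * (V * (B * U - A))) := by noncomm_ring
    rw [h, hMkey, hV1, Matrix.one_mul]; noncomm_ring
  have hM1 : IsUnit (M - 1) := by simpa [neg_sub] using hIM.neg
  have hN1 : IsUnit (N - 1) := by simpa [neg_sub] using hIN.neg
  have hVP : IsUnit (V * (B * U - A)) := hVu.mul h1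
  have hVQ : IsUnit (V * (B * U + A)) := hVu.mul h2
  have hEu : IsUnit ((C - V * A) + (D - V * B) * U) := by rw [hE]; exact hN1.mul hVQ
  have hFu : IsUnit ((D - V * B) * U - (C - V * A)) := by rw [hF]; exact hM1.mul hVP
  refine ⟨hEu, hFu, ?_⟩
  have hVPinv : (V * (B * U - A)) * (V * (B * U - A))⁻¹ = 1 :=
    Matrix.mul_nonsing_inv _ ((Matrix.isUnit_iff_isUnit_det _).mp hVP)
  have hVQinv : (V * (B * U + A)) * (V * (B * U + A))⁻¹ = 1 :=
    Matrix.mul_nonsing_inv _ ((Matrix.isUnit_iff_isUnit_det _).mp hVQ)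
  have hMinv : (M - 1)⁻¹ = -(1 - M)⁻¹ := by
    apply Matrix.inv_eq_right_inv
    have := Matrix.mul_nonsing_inv _ ((Matrix.isUnit_iff_isUnit_det _).mp hIM)
    calc (M - 1) * -(1 - M)⁻¹ = (1 - M) * (1 - M)⁻¹ := by noncomm_ring
      _ = 1 := this
  have hNinv : (N - 1)⁻¹ = -(1 - N)⁻¹ := by
    apply Matrix.inv_eq_right_inv
    have := Matrix.mul_nonsing_inv _ ((Matrix.isUnit_iff_isUnit_det _).mp hIN)
    calc (N - 1) * -(1 - N)⁻¹ = (1 - N) * (1 - N)⁻¹ := by noncomm_ring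
      _ = 1 := this
  have key1 : ((B + Vᴴ * D) * U - (A + Vᴴ * C)) * ((D - V * B) * U - (C - V * A))⁻¹ =
      -(Vᴴ * ((1 + M) * (1 - M)⁻¹)) := by
    rw [hH, hF, Matrix.mul_inv_rev, hMinv]
    calc Vᴴ * ((1 + M) * (V * (B * U - A))) * ((V * (B * U - A))⁻¹ * -(1 - M)⁻¹)
        = Vᴴ * ((1 + M) * (((V * (B * U - A)) * (V * (B * U - A))⁻¹) * -(1 - M)⁻¹)) := by
          noncomm_ring
      _ = -(Vᴴ * ((1 + M) * (1 - M)⁻¹)) := by rw [hVPinv]; noncomm_ring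
  have key2 : ((A + Vᴴ * C) + (B + Vᴴ * D) * U) * ((C - V * A) + (D - V * B) * U)⁻¹ =
      -(Vᴴ * ((1 + N) * (1 - N)⁻¹)) := by
    rw [hG, hE, Matrix.mul_inv_rev, hNinv]
    calc Vᴴ * ((1 + N) * (V * (B * U + A))) * ((V * (B * U + A))⁻¹ * -(1 - N)⁻¹)
        = Vᴴ * ((1 + N) * (((V * (B * U + A)) * (V * (B * U + A))⁻¹) * -(1 - N)⁻¹)) := by
          noncomm_ring
      _ = -(Vᴴ * ((1 + N) * (1 - N)⁻¹)) := by rw [hVQinv]; noncomm_ring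
  rw [key1, key2]
  noncomm_ring
end

section
/- Let L ≥ 1, let α be an L×L complex matrix with ‖α‖ < 1, and let ε ∈ (0,1). For unitary matrices V, V₁, V₂, U₁, U₂ ∈ U(L) and z ∈ ℂ \ {0}, define K = z⁻¹ V₂ ρ̃(α)⁻¹ V₁ ρ̃(α)⁻¹ + V₂ ρ̃(α)⁻¹ α* U₁* α ρ̃(α)⁻¹ and 𝐋 = U₂* α ρ̃(α)⁻¹ V₁ ρ̃(α)⁻¹ + z U₂* ρ̃(α)⁻¹ U₁* α ρ̃(α)⁻¹. Then for every z ∈ S_ε and all such unitaries, ‖𝐋 − V·K‖ ≤ (1/(1 − ‖α‖²)) · ( (2 + ε)‖α‖ + 1/(1 − ε) + ‖α‖² ). -/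
open Matrix
open scoped Matrix.Norms.L2Operator ComplexOrder InnerProductSpace

set_option maxHeartbeats 1000000

private lemma stmt16_sq_bound (L : ℕ) (α ρt : Matrix (Fin L) (Fin L) ℂ)
    (hρt : ρt.PosSemidef) (hρt2 : ρt * ρt = 1 - αᴴ * α)
    (x : EuclideanSpace ℂ (Fin L)) :
    ‖x‖^2 - ‖α‖^2 * ‖x‖^2 ≤ ‖(toEuclideanCLM (𝕜 := ℂ) ρt) x‖^2 := by
  set T := toEuclideanCLM (𝕜 := ℂ) ρt with hT
  set A := toEuclideanCLM (𝕜 := ℂ) α with hA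
  have hadj : ContinuousLinearMap.adjoint T = T := by
    rw [← ContinuousLinearMap.star_eq_adjoint, hT, ← map_star, Matrix.star_eq_conjTranspose,
      hρt.1]
  have h1 : (⟪T x, T x⟫_ℂ) = ⟪x, x⟫_ℂ - ⟪A x, A x⟫_ℂ := by
    calc ⟪T x, T x⟫_ℂ = ⟪(ContinuousLinearMap.adjoint T) (T x), x⟫_ℂ := by
          rw [ContinuousLinearMap.adjoint_inner_left]
      _ = ⟪(toEuclideanCLM (𝕜 := ℂ) (ρt * ρt)) x, x⟫_ℂ := by
          rw [hadj, _root_.map_mul]; rfl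
      _ = ⟪x - (ContinuousLinearMap.adjoint A) (A x), x⟫_ℂ := by
          rw [hρt2, map_sub, _root_.map_one, _root_.map_mul, ← Matrix.star_eq_conjTranspose,
            map_star, ContinuousLinearMap.star_eq_adjoint]
          rfl
      _ = ⟪x, x⟫_ℂ - ⟪A x, A x⟫_ℂ := by
          rw [inner_sub_left, ContinuousLinearMap.adjoint_inner_left]
  have h2 : ‖T x‖^2 = ‖x‖^2 - ‖A x‖^2 := by
    have := congrArg Complex.re h1
    simpa [← inner_self_eq_norm_sq (𝕜 := ℂ)] using this
  have h3 : ‖A x‖ ≤ ‖α‖ * ‖x‖ := by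
    have := A.le_opNorm x
    rwa [show ‖A‖ = ‖α‖ from rfl] at this
  have h4 : ‖A x‖^2 ≤ ‖α‖^2 * ‖x‖^2 := by
    nlinarith [norm_nonneg (A x), norm_nonneg x]
  linarith [h2]

private lemma stmt16_inv_bound (L : ℕ) (α ρt : Matrix (Fin L) (Fin L) ℂ)
    (hα : ‖α‖ < 1)
    (hρt : ρt.PosSemidef) (hρt2 : ρt * ρt = 1 - αᴴ * α) :
    ‖ρt⁻¹‖^2 ≤ 1 / (1 - ‖α‖^2) := by
  have ha0 : (0:ℝ) ≤ ‖α‖ := norm_nonneg _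
  have hc : (0:ℝ) < 1 - ‖α‖^2 := by nlinarith
  set c : ℝ := Real.sqrt (1 - ‖α‖^2) with hcdef
  have hcpos : 0 < c := Real.sqrt_pos.mpr hc
  have hcsq : c^2 = 1 - ‖α‖^2 := Real.sq_sqrt hc.le
  set T := toEuclideanCLM (𝕜 := ℂ) ρt with hT
  have hlow : ∀ x : EuclideanSpace ℂ (Fin L), c * ‖x‖ ≤ ‖T x‖ := by
    intro x
    have h := stmt16_sq_bound L α ρt hρt hρt2 x
    have : (c * ‖x‖)^2 ≤ ‖T x‖^2 := by
      rw [mul_pow, hcsq]; nlinarith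
    have h0 : 0 ≤ c * ‖x‖ := mul_nonneg hcpos.le (norm_nonneg _)
    nlinarith [norm_nonneg (T x)]
  have hdet : IsUnit ρt.det := by
    by_contra hd
    have : ∃ v ≠ 0, ρt.mulVec v = 0 := (Matrix.exists_mulVec_eq_zero_iff).mpr
      (by simpa using hd)
    obtain ⟨v, hv, hv0⟩ := this
    set x : EuclideanSpace ℂ (Fin L) := WithLp.toLp 2 v with hx
    have hTx : T x = 0 := by
      rw [hT, hx, toEuclideanCLM_toLp]
      simp [Matrix.toLin'_apply, hv0]
    have := hlow x
    rw [hTx, norm_zero] at this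
    have hxnorm : ‖x‖ = 0 := le_antisymm (by nlinarith [norm_nonneg x]) (norm_nonneg x)
    have : x = 0 := norm_eq_zero.mp hxnorm
    exact hv (by simpa [hx] using congrArg WithLp.ofLp this)
  have hmulinv : ρt * ρt⁻¹ = 1 := Matrix.mul_nonsing_inv ρt hdet
  have hnorm : ‖ρt⁻¹‖ ≤ c⁻¹ := by
    rw [show ‖ρt⁻¹‖ = ‖toEuclideanCLM (𝕜 := ℂ) ρt⁻¹‖ from rfl]
    refine ContinuousLinearMap.opNorm_le_bound _ (by positivity) (fun y => ?_)
    have hTy : T ((toEuclideanCLM (𝕜 := ℂ) ρt⁻¹) y) = y := by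
      have : T.comp (toEuclideanCLM (𝕜 := ℂ) ρt⁻¹) = ContinuousLinearMap.id ℂ _ := by
        rw [hT, ← ContinuousLinearMap.mul_def, ← _root_.map_mul, hmulinv, _root_.map_one]
        rfl
      exact congrFun (congrArg DFunLike.coe this) y
    have := hlow ((toEuclideanCLM (𝕜 := ℂ) ρt⁻¹) y)
    rw [hTy] at this
    rw [inv_mul_eq_div, le_div_iff₀ hcpos, mul_comm]
    exact this
  have h2 : ‖ρt⁻¹‖^2 ≤ (c⁻¹)^2 := by
    have := mul_self_le_mul_self (norm_nonneg _) hnorm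
    nlinarith
  calc ‖ρt⁻¹‖^2 ≤ (c⁻¹)^2 := h2
    _ = 1 / (1 - ‖α‖^2) := by rw [inv_pow, hcsq, inv_eq_one_div]

/-- Let `L ≥ 1`, `α` an `L×L` complex matrix with `‖α‖ < 1` (operator norm
induced by the Euclidean norm), and `ε ∈ (0,1)`. With `ρ` (resp. `ρt`) the positive
semidefinite square root of `1 - α αᴴ` (resp. `1 - αᴴ α`), for unitaries
`V, V₁, V₂, U₁, U₂ ∈ U(L)` and `z ∈ S_ε`, setting
`K = z⁻¹ V₂ ρt⁻¹ V₁ ρt⁻¹ + V₂ ρt⁻¹ αᴴ U₁ᴴ α ρt⁻¹` and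
`𝐋 = U₂ᴴ α ρt⁻¹ V₁ ρt⁻¹ + z U₂ᴴ ρt⁻¹ U₁ᴴ α ρt⁻¹`, one has
`‖𝐋 - V K‖ ≤ (1/(1-‖α‖²)) ((2+ε)‖α‖ + 1/(1-ε) + ‖α‖²)`. -/
theorem stmt_16 (L : ℕ) (hL : 1 ≤ L) (α ρ ρt : Matrix (Fin L) (Fin L) ℂ)
    (hα : ‖α‖ < 1)
    (hρ : ρ.PosSemidef) (hρ2 : ρ * ρ = 1 - α * αᴴ)
    (hρt : ρt.PosSemidef) (hρt2 : ρt * ρt = 1 - αᴴ * α)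
    (ε : ℝ) (hε : ε ∈ Set.Ioo (0 : ℝ) 1) :
    ∀ V V₁ V₂ U₁ U₂ : Matrix (Fin L) (Fin L) ℂ,
      V ∈ Matrix.unitaryGroup (Fin L) ℂ → V₁ ∈ Matrix.unitaryGroup (Fin L) ℂ →
      V₂ ∈ Matrix.unitaryGroup (Fin L) ℂ → U₁ ∈ Matrix.unitaryGroup (Fin L) ℂ →
      U₂ ∈ Matrix.unitaryGroup (Fin L) ℂ →
      ∀ z : ℂ, 1 - ε < ‖z‖ → ‖z‖ < 1 + ε →
        ‖(U₂ᴴ * α * ρt⁻¹ * V₁ * ρt⁻¹ + z • (U₂ᴴ * ρt⁻¹ * U₁ᴴ * α * ρt⁻¹)) -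
            V * (z⁻¹ • (V₂ * ρt⁻¹ * V₁ * ρt⁻¹) + V₂ * ρt⁻¹ * αᴴ * U₁ᴴ * α * ρt⁻¹)‖ ≤
          (1 / (1 - ‖α‖ ^ 2)) * ((2 + ε) * ‖α‖ + 1 / (1 - ε) + ‖α‖ ^ 2) := by
  intro V V₁ V₂ U₁ U₂ hV hV₁ hV₂ hU₁ hU₂ z hz1 hz2
  obtain ⟨hε0, hε1⟩ := hε
  have hL' : Nontrivial (Matrix (Fin L) (Fin L) ℂ) := by
    have : Nonempty (Fin L) := ⟨⟨0, hL⟩⟩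
    infer_instance
  have ha0 : (0:ℝ) ≤ ‖α‖ := norm_nonneg _
  have hc : (0:ℝ) < 1 - ‖α‖^2 := by nlinarith
  set r : ℝ := ‖ρt⁻¹‖ with hr
  have hr0 : 0 ≤ r := norm_nonneg _
  have hr2 : r^2 ≤ 1 / (1 - ‖α‖^2) := stmt16_inv_bound L α ρt hα hρt hρt2
  have haH : ‖αᴴ‖ = ‖α‖ := Matrix.l2_opNorm_conjTranspose α
  have hnV : ‖V‖ = 1 := CStarRing.norm_of_mem_unitary hV
  have hnV₁ : ‖V₁‖ = 1 := CStarRing.norm_of_mem_unitary hV₁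
  have hnV₂ : ‖V₂‖ = 1 := CStarRing.norm_of_mem_unitary hV₂
  have hnU₁ : ‖U₁ᴴ‖ = 1 := by
    rw [Matrix.l2_opNorm_conjTranspose]; exact CStarRing.norm_of_mem_unitary hU₁
  have hnU₂ : ‖U₂ᴴ‖ = 1 := by
    rw [Matrix.l2_opNorm_conjTranspose]; exact CStarRing.norm_of_mem_unitary hU₂
  have hzabs : ‖z‖ = ‖z‖ := rfl
  have hz0 : (0:ℝ) < 1 - ε := by linarith
  have hzpos : 0 < ‖z‖ := lt_trans hz0 hz1
  have hzinv : ‖z⁻¹‖ ≤ 1 / (1 - ε) := by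
    rw [norm_inv, hzabs, inv_le_comm₀ hzpos (by positivity), one_div, inv_inv]
    exact hz1.le
  have mul_le : ∀ (A B : Matrix (Fin L) (Fin L) ℂ), ‖A * B‖ ≤ ‖A‖ * ‖B‖ :=
    fun A B => Matrix.l2_opNorm_mul A B
  have five : ∀ A B C D E : Matrix (Fin L) (Fin L) ℂ,
      ‖A * B * C * D * E‖ ≤ ‖A‖ * ‖B‖ * ‖C‖ * ‖D‖ * ‖E‖ := by
    intro A B C D E
    calc ‖A * B * C * D * E‖ ≤ ‖A * B * C * D‖ * ‖E‖ := mul_le _ _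
      _ ≤ (‖A * B * C‖ * ‖D‖) * ‖E‖ :=
          mul_le_mul_of_nonneg_right (mul_le _ _) (norm_nonneg _)
      _ ≤ ((‖A * B‖ * ‖C‖) * ‖D‖) * ‖E‖ :=
          mul_le_mul_of_nonneg_right
            (mul_le_mul_of_nonneg_right (mul_le _ _) (norm_nonneg _)) (norm_nonneg _)
      _ ≤ (((‖A‖ * ‖B‖) * ‖C‖) * ‖D‖) * ‖E‖ :=
          mul_le_mul_of_nonneg_right (mul_le_mul_of_nonneg_right
            (mul_le_mul_of_nonneg_right (mul_le _ _) (norm_nonneg _)) (norm_nonneg _))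
            (norm_nonneg _)
      _ = ‖A‖ * ‖B‖ * ‖C‖ * ‖D‖ * ‖E‖ := by ring
  have bound1 : ‖U₂ᴴ * α * ρt⁻¹ * V₁ * ρt⁻¹‖ ≤ ‖α‖ * r^2 := by
    calc ‖U₂ᴴ * α * ρt⁻¹ * V₁ * ρt⁻¹‖ ≤ ‖U₂ᴴ‖ * ‖α‖ * ‖ρt⁻¹‖ * ‖V₁‖ * ‖ρt⁻¹‖ := five _ _ _ _ _
      _ = ‖α‖ * r^2 := by rw [hnU₂, hnV₁, ← hr]; ring
  have bound2 : ‖U₂ᴴ * ρt⁻¹ * U₁ᴴ * α * ρt⁻¹‖ ≤ ‖α‖ * r^2 := by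
    calc ‖U₂ᴴ * ρt⁻¹ * U₁ᴴ * α * ρt⁻¹‖ ≤ ‖U₂ᴴ‖ * ‖ρt⁻¹‖ * ‖U₁ᴴ‖ * ‖α‖ * ‖ρt⁻¹‖ := five _ _ _ _ _
      _ = ‖α‖ * r^2 := by rw [hnU₂, hnU₁, ← hr]; ring
  have four : ∀ A B C D : Matrix (Fin L) (Fin L) ℂ,
      ‖A * B * C * D‖ ≤ ‖A‖ * ‖B‖ * ‖C‖ * ‖D‖ := by
    intro A B C D
    calc ‖A * B * C * D‖ ≤ ‖A * B * C‖ * ‖D‖ := mul_le _ _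
      _ ≤ (‖A * B‖ * ‖C‖) * ‖D‖ :=
          mul_le_mul_of_nonneg_right (mul_le _ _) (norm_nonneg _)
      _ ≤ ((‖A‖ * ‖B‖) * ‖C‖) * ‖D‖ :=
          mul_le_mul_of_nonneg_right
            (mul_le_mul_of_nonneg_right (mul_le _ _) (norm_nonneg _)) (norm_nonneg _)
      _ = ‖A‖ * ‖B‖ * ‖C‖ * ‖D‖ := by ring
  have six : ∀ A B C D E F : Matrix (Fin L) (Fin L) ℂ,
      ‖A * B * C * D * E * F‖ ≤ ‖A‖ * ‖B‖ * ‖C‖ * ‖D‖ * ‖E‖ * ‖F‖ := by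
    intro A B C D E F
    calc ‖A * B * C * D * E * F‖ ≤ ‖A * B * C * D * E‖ * ‖F‖ := mul_le _ _
      _ ≤ (‖A‖ * ‖B‖ * ‖C‖ * ‖D‖ * ‖E‖) * ‖F‖ :=
          mul_le_mul_of_nonneg_right (five _ _ _ _ _) (norm_nonneg _)
      _ = ‖A‖ * ‖B‖ * ‖C‖ * ‖D‖ * ‖E‖ * ‖F‖ := by ring
  have bound3 : ‖V * (V₂ * ρt⁻¹ * V₁ * ρt⁻¹)‖ ≤ r^2 := by
    calc ‖V * (V₂ * ρt⁻¹ * V₁ * ρt⁻¹)‖ ≤ ‖V‖ * ‖V₂ * ρt⁻¹ * V₁ * ρt⁻¹‖ := mul_le _ _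
      _ = ‖V₂ * ρt⁻¹ * V₁ * ρt⁻¹‖ := by rw [hnV, one_mul]
      _ ≤ ‖V₂‖ * ‖ρt⁻¹‖ * ‖V₁‖ * ‖ρt⁻¹‖ := four _ _ _ _
      _ = r^2 := by rw [hnV₂, hnV₁, ← hr]; ring
  have bound4 : ‖V * (V₂ * ρt⁻¹ * αᴴ * U₁ᴴ * α * ρt⁻¹)‖ ≤ ‖α‖^2 * r^2 := by
    calc ‖V * (V₂ * ρt⁻¹ * αᴴ * U₁ᴴ * α * ρt⁻¹)‖
        ≤ ‖V‖ * ‖V₂ * ρt⁻¹ * αᴴ * U₁ᴴ * α * ρt⁻¹‖ := mul_le _ _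
      _ = ‖V₂ * ρt⁻¹ * αᴴ * U₁ᴴ * α * ρt⁻¹‖ := by rw [hnV, one_mul]
      _ ≤ ‖V₂‖ * ‖ρt⁻¹‖ * ‖αᴴ‖ * ‖U₁ᴴ‖ * ‖α‖ * ‖ρt⁻¹‖ := six _ _ _ _ _ _
      _ = ‖α‖^2 * r^2 := by rw [hnV₂, hnU₁, haH, ← hr]; ring
  have hsplit : (U₂ᴴ * α * ρt⁻¹ * V₁ * ρt⁻¹ + z • (U₂ᴴ * ρt⁻¹ * U₁ᴴ * α * ρt⁻¹)) -
      V * (z⁻¹ • (V₂ * ρt⁻¹ * V₁ * ρt⁻¹) + V₂ * ρt⁻¹ * αᴴ * U₁ᴴ * α * ρt⁻¹) =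
      (U₂ᴴ * α * ρt⁻¹ * V₁ * ρt⁻¹) + z • (U₂ᴴ * ρt⁻¹ * U₁ᴴ * α * ρt⁻¹)
        - z⁻¹ • (V * (V₂ * ρt⁻¹ * V₁ * ρt⁻¹)) - V * (V₂ * ρt⁻¹ * αᴴ * U₁ᴴ * α * ρt⁻¹) := by
    rw [Matrix.mul_add, Matrix.mul_smul]
    abel
  rw [hsplit]
  have tineq : ‖(U₂ᴴ * α * ρt⁻¹ * V₁ * ρt⁻¹) + z • (U₂ᴴ * ρt⁻¹ * U₁ᴴ * α * ρt⁻¹)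
        - z⁻¹ • (V * (V₂ * ρt⁻¹ * V₁ * ρt⁻¹)) - V * (V₂ * ρt⁻¹ * αᴴ * U₁ᴴ * α * ρt⁻¹)‖ ≤
      ‖U₂ᴴ * α * ρt⁻¹ * V₁ * ρt⁻¹‖ + ‖z‖ * ‖U₂ᴴ * ρt⁻¹ * U₁ᴴ * α * ρt⁻¹‖
        + ‖z⁻¹‖ * ‖V * (V₂ * ρt⁻¹ * V₁ * ρt⁻¹)‖ + ‖V * (V₂ * ρt⁻¹ * αᴴ * U₁ᴴ * α * ρt⁻¹)‖ := by
    calc _ ≤ ‖(U₂ᴴ * α * ρt⁻¹ * V₁ * ρt⁻¹) + z • (U₂ᴴ * ρt⁻¹ * U₁ᴴ * α * ρt⁻¹)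
        - z⁻¹ • (V * (V₂ * ρt⁻¹ * V₁ * ρt⁻¹))‖ + ‖V * (V₂ * ρt⁻¹ * αᴴ * U₁ᴴ * α * ρt⁻¹)‖ :=
          norm_sub_le _ _
      _ ≤ (‖(U₂ᴴ * α * ρt⁻¹ * V₁ * ρt⁻¹) + z • (U₂ᴴ * ρt⁻¹ * U₁ᴴ * α * ρt⁻¹)‖
            + ‖z⁻¹ • (V * (V₂ * ρt⁻¹ * V₁ * ρt⁻¹))‖) + ‖V * (V₂ * ρt⁻¹ * αᴴ * U₁ᴴ * α * ρt⁻¹)‖ := by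
          gcongr
          try exact norm_sub_le _ _
      _ ≤ ((‖U₂ᴴ * α * ρt⁻¹ * V₁ * ρt⁻¹‖ + ‖z • (U₂ᴴ * ρt⁻¹ * U₁ᴴ * α * ρt⁻¹)‖)
            + ‖z⁻¹ • (V * (V₂ * ρt⁻¹ * V₁ * ρt⁻¹))‖) + ‖V * (V₂ * ρt⁻¹ * αᴴ * U₁ᴴ * α * ρt⁻¹)‖ := by
          gcongr
          try exact norm_add_le _ _
      _ = _ := by rw [norm_smul, norm_smul]
  have hz2' : ‖z‖ ≤ 1 + ε := by rw [hzabs]; exact hz2.le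
  have e1 : ‖z‖ * ‖U₂ᴴ * ρt⁻¹ * U₁ᴴ * α * ρt⁻¹‖ ≤ (1 + ε) * (‖α‖ * r^2) :=
    mul_le_mul hz2' bound2 (norm_nonneg _) (by linarith)
  have e2 : ‖z⁻¹‖ * ‖V * (V₂ * ρt⁻¹ * V₁ * ρt⁻¹)‖ ≤ (1 / (1 - ε)) * r^2 :=
    mul_le_mul hzinv bound3 (norm_nonneg _) (by positivity)
  have key : ‖α‖ * r^2 + (1 + ε) * (‖α‖ * r^2) + (1 / (1 - ε)) * r^2 + ‖α‖^2 * r^2 ≤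
      (1 / (1 - ‖α‖ ^ 2)) * ((2 + ε) * ‖α‖ + 1 / (1 - ε) + ‖α‖ ^ 2) := by
    have hcoef : (0:ℝ) ≤ (2 + ε) * ‖α‖ + 1 / (1 - ε) + ‖α‖ ^ 2 := by positivity
    have hr2' : r^2 * ((2 + ε) * ‖α‖ + 1 / (1 - ε) + ‖α‖ ^ 2) ≤
        (1 / (1 - ‖α‖ ^ 2)) * ((2 + ε) * ‖α‖ + 1 / (1 - ε) + ‖α‖ ^ 2) :=
      mul_le_mul_of_nonneg_right hr2 hcoef
    calc ‖α‖ * r^2 + (1 + ε) * (‖α‖ * r^2) + (1 / (1 - ε)) * r^2 + ‖α‖^2 * r^2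
        = r^2 * ((2 + ε) * ‖α‖ + 1 / (1 - ε) + ‖α‖ ^ 2) := by ring
      _ ≤ _ := hr2'
  linarith [tineq, bound1, bound4, e1, e2, key]
end

section
/- Let L ≥ 1, let α be an L×L complex matrix with ‖α‖ < 1, let U₁, V₁, V₂ ∈ U(L), and let z ∈ ℂ \ {0}. Define W = z⁻¹ V₂ ρ̃(α)⁻¹ V₁ ρ̃(α)⁻¹ + V₂ ρ̃(α)⁻¹ α* U₁* ρ(α)⁻¹ and set h = |z| ‖α‖ (2 − √(1 − ‖α‖²))² / (1 − ‖α‖²). If h < 1, then W is invertible and ‖W⁻¹‖ ≤ |z| (2 − √(1 − ‖α‖²))² / (1 − h). -/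
open Matrix
open scoped Matrix.Norms.L2Operator ComplexOrder

set_option maxHeartbeats 2000000

private lemma mcancel {L : ℕ} {X Y : Matrix (Fin L) (Fin L) ℂ} (h : X * Y = 1)
    (M : Matrix (Fin L) (Fin L) ℂ) : X * (Y * M) = M := by
  rw [← Matrix.mul_assoc, h, Matrix.one_mul]

private lemma inner_key {L : ℕ} (M : Matrix (Fin L) (Fin L) ℂ) (x : EuclideanSpace ℂ (Fin L)) :
    (inner ℂ x (toEuclideanCLM (𝕜 := ℂ) (Mᴴ * M) x) : ℂ)
      = ((‖toEuclideanCLM (𝕜 := ℂ) M x‖ : ℝ) : ℂ) ^ 2 := by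
  have hM : toEuclideanCLM (𝕜 := ℂ) Mᴴ
      = ContinuousLinearMap.adjoint (toEuclideanCLM (𝕜 := ℂ) M) := by
    rw [← ContinuousLinearMap.star_eq_adjoint, ← map_star, Matrix.star_eq_conjTranspose]
  rw [_root_.map_mul, ContinuousLinearMap.mul_apply, hM, ContinuousLinearMap.adjoint_inner_right,
    inner_self_eq_norm_sq_to_K]
  rfl

private lemma sq_key {L : ℕ} (ρ β : Matrix (Fin L) (Fin L) ℂ)
    (hρH : ρᴴ = ρ) (hρ2 : ρ * ρ = 1 - β * βᴴ) (x : EuclideanSpace ℂ (Fin L)) :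
    ‖toEuclideanCLM (𝕜 := ℂ) ρ x‖ ^ 2 + ‖toEuclideanCLM (𝕜 := ℂ) βᴴ x‖ ^ 2 = ‖x‖ ^ 2 := by
  have h1 := inner_key (L := L) ρ x
  have h2 := inner_key (L := L) βᴴ x
  rw [hρH] at h1
  rw [conjTranspose_conjTranspose] at h2
  have key : ((‖toEuclideanCLM (𝕜 := ℂ) ρ x‖ : ℝ) : ℂ) ^ 2
      + ((‖toEuclideanCLM (𝕜 := ℂ) βᴴ x‖ : ℝ) : ℂ) ^ 2 = ((‖x‖ : ℝ) : ℂ) ^ 2 := by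
    rw [← h1, ← h2, ← inner_add_right]
    have : toEuclideanCLM (𝕜 := ℂ) (ρ * ρ) x + toEuclideanCLM (𝕜 := ℂ) (β * βᴴ) x = x := by
      rw [← ContinuousLinearMap.add_apply, ← map_add, hρ2, sub_add_cancel, _root_.map_one,
        ContinuousLinearMap.one_apply]
    rw [this, inner_self_eq_norm_sq_to_K]
    try rfl
  exact_mod_cast key

/-- Let `L ≥ 1`, `α` an `L×L` complex matrix with `‖α‖ < 1` (operator norm
induced by the Euclidean norm), `U₁, V₁, V₂ ∈ U(L)` and `z ∈ ℂ \ {0}`. With `ρ` (resp. `ρt`)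
the positive semidefinite square root of `1 - α αᴴ` (resp. `1 - αᴴ α`), define
`W = z⁻¹ V₂ ρt⁻¹ V₁ ρt⁻¹ + V₂ ρt⁻¹ αᴴ U₁ᴴ ρ⁻¹` and
`h = |z| ‖α‖ (2 - √(1-‖α‖²))² / (1-‖α‖²)`. If `h < 1` then `W` is invertible and
`‖W⁻¹‖ ≤ |z| (2 - √(1-‖α‖²))² / (1-h)`. -/
theorem stmt_18 (L : ℕ) (hL : 1 ≤ L) (α ρ ρt U₁ V₁ V₂ : Matrix (Fin L) (Fin L) ℂ)
    (hα : ‖α‖ < 1)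
    (hρ : ρ.PosSemidef) (hρ2 : ρ * ρ = 1 - α * αᴴ)
    (hρt : ρt.PosSemidef) (hρt2 : ρt * ρt = 1 - αᴴ * α)
    (hU₁ : U₁ ∈ Matrix.unitaryGroup (Fin L) ℂ) (hV₁ : V₁ ∈ Matrix.unitaryGroup (Fin L) ℂ)
    (hV₂ : V₂ ∈ Matrix.unitaryGroup (Fin L) ℂ)
    (z : ℂ) (hz : z ≠ 0)
    (hsmall :
      ‖z‖ * ‖α‖ * (2 - Real.sqrt (1 - ‖α‖ ^ 2)) ^ 2 / (1 - ‖α‖ ^ 2) < 1) :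
    IsUnit (z⁻¹ • (V₂ * ρt⁻¹ * V₁ * ρt⁻¹) + V₂ * ρt⁻¹ * αᴴ * U₁ᴴ * ρ⁻¹) ∧
      ‖(z⁻¹ • (V₂ * ρt⁻¹ * V₁ * ρt⁻¹) + V₂ * ρt⁻¹ * αᴴ * U₁ᴴ * ρ⁻¹)⁻¹‖ ≤
        ‖z‖ * (2 - Real.sqrt (1 - ‖α‖ ^ 2)) ^ 2 /
          (1 - ‖z‖ * ‖α‖ * (2 - Real.sqrt (1 - ‖α‖ ^ 2)) ^ 2 / (1 - ‖α‖ ^ 2)) := by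
  haveI : Nonempty (Fin L) := Fin.pos_iff_nonempty.mp hL
  have hα0 : (0:ℝ) ≤ ‖α‖ := norm_nonneg α
  have h1pos : (0:ℝ) < 1 - ‖α‖ ^ 2 := by nlinarith
  set s : ℝ := Real.sqrt (1 - ‖α‖ ^ 2) with hs_def
  have hsq : s ^ 2 = 1 - ‖α‖ ^ 2 := Real.sq_sqrt h1pos.le
  have hs0 : 0 < s := Real.sqrt_pos.mpr h1pos
  have hs1 : s ≤ 1 := by
    rw [hs_def]
    exact Real.sqrt_le_one.mpr (by nlinarith)
  have h2s : 1 ≤ (2 - s) ^ 2 := by nlinarith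
  -- invertibility of ρ and ρt
  have hαα : ‖α * αᴴ‖ < 1 := by
    calc ‖α * αᴴ‖ ≤ ‖α‖ * ‖αᴴ‖ := norm_mul_le _ _
      _ = ‖α‖ * ‖α‖ := by rw [Matrix.l2_opNorm_conjTranspose]
      _ < 1 := by nlinarith
  have hαα' : ‖αᴴ * α‖ < 1 := by
    calc ‖αᴴ * α‖ ≤ ‖αᴴ‖ * ‖α‖ := norm_mul_le _ _
      _ = ‖α‖ * ‖α‖ := by rw [Matrix.l2_opNorm_conjTranspose]
      _ < 1 := by nlinarith
  have hρdet : IsUnit ρ.det := by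
    have h := isUnit_one_sub_of_norm_lt_one hαα
    rw [← hρ2] at h
    have := (Matrix.isUnit_iff_isUnit_det _).mp h
    rw [Matrix.det_mul] at this
    exact isUnit_of_mul_isUnit_left this
  have hρtdet : IsUnit ρt.det := by
    have h := isUnit_one_sub_of_norm_lt_one hαα'
    rw [← hρt2] at h
    have := (Matrix.isUnit_iff_isUnit_det _).mp h
    rw [Matrix.det_mul] at this
    exact isUnit_of_mul_isUnit_left this
  have e₁ : ρt * ρt⁻¹ = 1 := Matrix.mul_nonsing_inv ρt hρtdet
  have e₂ : ρt⁻¹ * ρt = 1 := Matrix.nonsing_inv_mul ρt hρtdet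
  have e₃ : ρ * ρ⁻¹ = 1 := Matrix.mul_nonsing_inv ρ hρdet
  have e₄ : V₁ * V₁ᴴ = 1 := by
    have := (Matrix.mem_unitaryGroup_iff).mp hV₁
    rwa [Matrix.star_eq_conjTranspose] at this
  have e₅ : V₁ᴴ * V₁ = 1 := by
    have := (Matrix.mem_unitaryGroup_iff').mp hV₁
    rwa [Matrix.star_eq_conjTranspose] at this
  have e₆ : V₂ * V₂ᴴ = 1 := by
    have := (Matrix.mem_unitaryGroup_iff).mp hV₂
    rwa [Matrix.star_eq_conjTranspose] at this
  have e₇ : V₂ᴴ * V₂ = 1 := by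
    have := (Matrix.mem_unitaryGroup_iff').mp hV₂
    rwa [Matrix.star_eq_conjTranspose] at this
  -- norm facts
  have hρ_lower : ∀ x : EuclideanSpace ℂ (Fin L),
      s * ‖x‖ ≤ ‖toEuclideanCLM (𝕜 := ℂ) ρ x‖ := by
    intro x
    have key := sq_key ρ α hρ.1 hρ2 x
    have hb : ‖toEuclideanCLM (𝕜 := ℂ) αᴴ x‖ ≤ ‖α‖ * ‖x‖ := by
      have := (toEuclideanCLM (𝕜 := ℂ) αᴴ).le_opNorm x
      rwa [← Matrix.cstar_norm_def, Matrix.l2_opNorm_conjTranspose] at this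
    have hx0 : (0:ℝ) ≤ ‖x‖ := norm_nonneg _
    have hTx0 : (0:ℝ) ≤ ‖toEuclideanCLM (𝕜 := ℂ) ρ x‖ := norm_nonneg _
    nlinarith [sq_nonneg (‖toEuclideanCLM (𝕜 := ℂ) ρ x‖ + s * ‖x‖),
      sq_nonneg (‖toEuclideanCLM (𝕜 := ℂ) αᴴ x‖ - ‖α‖ * ‖x‖),
      norm_nonneg (toEuclideanCLM (𝕜 := ℂ) αᴴ x), mul_nonneg hs0.le hx0]
  have hρinv_norm : ‖ρ⁻¹‖ ≤ s⁻¹ := by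
    rw [Matrix.cstar_norm_def]
    refine ContinuousLinearMap.opNorm_le_bound _ (by positivity) fun y => ?_
    have hy : toEuclideanCLM (𝕜 := ℂ) ρ (toEuclideanCLM (𝕜 := ℂ) ρ⁻¹ y) = y := by
      rw [← ContinuousLinearMap.mul_apply, ← _root_.map_mul, e₃, _root_.map_one, ContinuousLinearMap.one_apply]
    have := hρ_lower (toEuclideanCLM (𝕜 := ℂ) ρ⁻¹ y)
    rw [hy] at this
    rw [inv_mul_eq_div, le_div_iff₀ hs0, mul_comm]
    exact this
  have hρt_norm : ‖ρt‖ ≤ 1 := by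
    rw [Matrix.cstar_norm_def]
    refine ContinuousLinearMap.opNorm_le_bound _ zero_le_one fun x => ?_
    have hρt2' : ρt * ρt = 1 - αᴴ * αᴴᴴ := by rwa [conjTranspose_conjTranspose]
    have key := sq_key ρt αᴴ hρt.1 hρt2' x
    have hTx0 : (0:ℝ) ≤ ‖toEuclideanCLM (𝕜 := ℂ) ρt x‖ := norm_nonneg _
    have hx0 : (0:ℝ) ≤ ‖x‖ := norm_nonneg _
    rw [one_mul]
    nlinarith [sq_nonneg (‖toEuclideanCLM (𝕜 := ℂ) αᴴᴴ x‖)]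
  -- unitary norms
  have hU₁s : U₁ᴴ ∈ Matrix.unitaryGroup (Fin L) ℂ := by
    have := Unitary.star_mem hU₁
    rwa [Matrix.star_eq_conjTranspose] at this
  have hV₁s : V₁ᴴ ∈ Matrix.unitaryGroup (Fin L) ℂ := by
    have := Unitary.star_mem hV₁
    rwa [Matrix.star_eq_conjTranspose] at this
  have hV₂s : V₂ᴴ ∈ Matrix.unitaryGroup (Fin L) ℂ := by
    have := Unitary.star_mem hV₂
    rwa [Matrix.star_eq_conjTranspose] at this
  -- abbreviations
  set A : Matrix (Fin L) (Fin L) ℂ := V₂ * ρt⁻¹ * V₁ * ρt⁻¹ with hA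
  set B : Matrix (Fin L) (Fin L) ℂ := V₂ * ρt⁻¹ * αᴴ * U₁ᴴ * ρ⁻¹ with hB
  set A' : Matrix (Fin L) (Fin L) ℂ := ρt * V₁ᴴ * ρt * V₂ᴴ with hA'
  have hAA' : A * A' = 1 := by
    rw [hA, hA']
    simp only [Matrix.mul_assoc, mcancel e₂, mcancel e₄, e₆]
  have hA'A : A' * A = 1 := by
    rw [hA, hA']
    simp only [Matrix.mul_assoc, mcancel e₇, mcancel e₁, mcancel e₅, e₁]
  set C : Matrix (Fin L) (Fin L) ℂ := A' * B with hC
  have hC_eq : C = ρt * V₁ᴴ * αᴴ * U₁ᴴ * ρ⁻¹ := by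
    rw [hC, hA', hB]
    simp only [Matrix.mul_assoc, mcancel e₇, mcancel e₁]
  have hACB : A * C = B := by
    rw [hC, ← Matrix.mul_assoc, hAA', Matrix.one_mul]
  have hC_norm : ‖C‖ ≤ ‖α‖ * s⁻¹ := by
    calc ‖C‖ = ‖ρt * V₁ᴴ * αᴴ * U₁ᴴ * ρ⁻¹‖ := by rw [hC_eq]
      _ ≤ ‖ρt * V₁ᴴ * αᴴ * U₁ᴴ‖ * ‖ρ⁻¹‖ := norm_mul_le _ _
      _ = ‖ρt * V₁ᴴ * αᴴ‖ * ‖ρ⁻¹‖ := by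
          rw [CStarRing.norm_mul_mem_unitary _ hU₁s]
      _ ≤ (‖ρt * V₁ᴴ‖ * ‖αᴴ‖) * ‖ρ⁻¹‖ :=
          mul_le_mul_of_nonneg_right (norm_mul_le _ _) (norm_nonneg _)
      _ = (‖ρt‖ * ‖α‖) * ‖ρ⁻¹‖ := by
          rw [CStarRing.norm_mul_mem_unitary _ hV₁s, Matrix.l2_opNorm_conjTranspose]
      _ ≤ (1 * ‖α‖) * s⁻¹ := by
          apply mul_le_mul _ hρinv_norm (norm_nonneg _) (by positivity)
          exact mul_le_mul_of_nonneg_right hρt_norm hα0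
      _ = ‖α‖ * s⁻¹ := by ring
  have hA'_norm : ‖A'‖ ≤ 1 := by
    calc ‖A'‖ = ‖ρt * V₁ᴴ * ρt‖ := by rw [hA', CStarRing.norm_mul_mem_unitary _ hV₂s]
      _ ≤ ‖ρt * V₁ᴴ‖ * ‖ρt‖ := norm_mul_le _ _
      _ = ‖ρt‖ * ‖ρt‖ := by rw [CStarRing.norm_mul_mem_unitary _ hV₁s]
      _ ≤ 1 := by nlinarith [norm_nonneg ρt]
  -- the perturbation
  set t : Matrix (Fin L) (Fin L) ℂ := -(z • C) with ht_def
  set hq : ℝ := ‖z‖ * ‖α‖ * (2 - s) ^ 2 / (1 - ‖α‖ ^ 2) with hq_def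
  have hz0 : (0:ℝ) ≤ ‖z‖ := norm_nonneg z
  have ht_le : ‖t‖ ≤ hq := by
    have h1 : ‖t‖ = ‖z‖ * ‖C‖ := by
      rw [ht_def, norm_neg, norm_smul]
    have h2 : ‖α‖ * s⁻¹ ≤ ‖α‖ * (2 - s) ^ 2 / (1 - ‖α‖ ^ 2) := by
      rw [← hsq, ← div_eq_mul_inv, div_le_div_iff₀ hs0 (pow_pos hs0 2)]
      nlinarith [mul_le_mul_of_nonneg_left (mul_le_mul_of_nonneg_right h2s hs0.le) hα0,
        mul_le_mul_of_nonneg_right hs1 hs0.le]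
    calc ‖t‖ = ‖z‖ * ‖C‖ := h1
      _ ≤ ‖z‖ * (‖α‖ * s⁻¹) := mul_le_mul_of_nonneg_left hC_norm hz0
      _ ≤ ‖z‖ * (‖α‖ * (2 - s) ^ 2 / (1 - ‖α‖ ^ 2)) :=
          mul_le_mul_of_nonneg_left h2 hz0
      _ = hq := by rw [hq_def]; ring
  have hq0 : 0 ≤ hq := le_trans (norm_nonneg t) ht_le
  have hq1 : hq < 1 := hsmall
  have ht1 : ‖t‖ < 1 := lt_of_le_of_lt ht_le hq1
  set S : Matrix (Fin L) (Fin L) ℂ := ∑' n : ℕ, t ^ n with hS_def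
  have hS1 : (1 - t) * S = 1 := mul_neg_geom_series t ht1
  have hS2 : S * (1 - t) = 1 := geom_series_mul_neg t ht1
  have hS_norm : ‖S‖ ≤ (1 - ‖t‖)⁻¹ := by
    have := tsum_geometric_le_of_norm_lt_one t ht1
    rw [CStarRing.norm_one] at this
    simpa using this
  -- factorization of W
  have hW : z⁻¹ • A + B = z⁻¹ • (A * (1 - t)) := by
    have ht' : (1 : Matrix (Fin L) (Fin L) ℂ) - t = 1 + z • C := by
      rw [ht_def, sub_neg_eq_add]
    rw [ht', mul_add, mul_one, Matrix.mul_smul, hACB, smul_add, smul_smul,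
      inv_mul_cancel₀ hz, one_smul]
  set M : Matrix (Fin L) (Fin L) ℂ := z • (S * A') with hM_def
  have hWM : (z⁻¹ • A + B) * M = 1 := by
    rw [hW, hM_def, Matrix.smul_mul, Matrix.mul_smul, smul_smul, inv_mul_cancel₀ hz, one_smul]
    simp only [Matrix.mul_assoc]
    rw [← Matrix.mul_assoc (1 - t) S A', hS1, Matrix.one_mul, hAA']
  have hMW : M * (z⁻¹ • A + B) = 1 := by
    rw [hW, hM_def, Matrix.smul_mul, Matrix.mul_smul, smul_smul, mul_inv_cancel₀ hz, one_smul]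
    simp only [Matrix.mul_assoc]
    rw [← Matrix.mul_assoc A' A (1 - t), hA'A, Matrix.one_mul, hS2]
  refine ⟨⟨⟨_, M, hWM, hMW⟩, rfl⟩, ?_⟩
  rw [Matrix.inv_eq_right_inv hWM]
  have hMnorm : ‖M‖ ≤ ‖z‖ * (1 - ‖t‖)⁻¹ := by
    rw [hM_def, norm_smul]
    refine mul_le_mul_of_nonneg_left ?_ hz0
    calc ‖S * A'‖ ≤ ‖S‖ * ‖A'‖ := norm_mul_le _ _
      _ ≤ (1 - ‖t‖)⁻¹ * 1 := by
          exact mul_le_mul hS_norm hA'_norm (norm_nonneg _) (inv_nonneg.mpr (by linarith))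
      _ = (1 - ‖t‖)⁻¹ := mul_one _
  have hstep : (1 - ‖t‖)⁻¹ ≤ (1 - hq)⁻¹ := by
    have hq1' : 0 < 1 - hq := by linarith
    have : 1 - hq ≤ 1 - ‖t‖ := by linarith
    exact inv_anti₀ hq1' this
  calc ‖M‖ ≤ ‖z‖ * (1 - ‖t‖)⁻¹ := hMnorm
    _ ≤ ‖z‖ * (1 - hq)⁻¹ := mul_le_mul_of_nonneg_left hstep hz0
    _ ≤ (‖z‖ * (2 - s) ^ 2) * (1 - hq)⁻¹ := by
        apply mul_le_mul_of_nonneg_right _ (inv_nonneg.mpr (by linarith))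
        nlinarith
    _ = ‖z‖ * (2 - s) ^ 2 / (1 - hq) := by rw [div_eq_mul_inv]
end
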